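/- arXiv:0706.2899 — 4 statements merged into one kernel-verified Lean document; each statement's English description precedes it below -/
import Mathlib

section
/- Let F, H be real n×n matrices with H of rank 1 and α_1, α_2 ∈ ℝ such that F + α_1 H and F + α_2 H are both Hurwitz stable. If there exists a symmetric matrix P = Pᵀ with P(F + α_i H) + (F + α_i H)ᵀP negative definite for i = 1, 2, then for every λ ∈ [0,1] the matrix λ(F + α_1 H) + (1−λ)(F + α_2 H) is Hurwitz stable. -/
open Module

lemma key_pos (m : ℕ) : ∀ (V : Type) [AddCommGroup V] [Module ℂ V] [FiniteDimensional ℂ V],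
    Module.finrank ℂ V = m →
    ∀ (f : V →ₗ[ℂ] V) (B : V → V →ₗ[ℂ] ℂ),
      (∀ v w, (starRingEnd ℂ) (B v w) = B w v) →
      (∀ μ : ℂ, Module.End.HasEigenvalue f μ → μ.re < 0) →
      (∀ v : V, v ≠ 0 → (B (f v) v + B v (f v)).re < 0) →
      ∀ v : V, v ≠ 0 → 0 < (B v v).re := by
  induction m using Nat.strong_induction_on with
  | _ m IH =>
  intro V _ _ _ hdim f B hconj heig hL v hv
  rcases Nat.eq_zero_or_pos m with hm | hm
  · subst hm
    rw [Module.finrank_zero_iff] at hdim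
    exact absurd (Subsingleton.elim v 0) hv
  have : Nontrivial V := Module.nontrivial_of_finrank_pos (hdim ▸ hm)
  obtain ⟨lam, hlam⟩ := Module.End.exists_eigenvalue f
  obtain ⟨v₀, hv₀⟩ := hlam.exists_hasEigenvector
  have hv₀ne : v₀ ≠ 0 := hv₀.2
  have hfv₀ : f v₀ = lam • v₀ := hv₀.apply_eq_smul
  set q : ℂ := B v₀ v₀ with hq
  have hqconj : (starRingEnd ℂ) q = q := hconj v₀ v₀
  have hqim : q.im = 0 := by
    have := congrArg Complex.im hqconj
    simpa using by linarith [this, Complex.conj_im q]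
  have hlamre : lam.re < 0 := heig lam hlam
  have hqre : 0 < q.re := by
    have h0 := hL v₀ hv₀ne
    rw [hfv₀] at h0
    have e1 : B (lam • v₀) v₀ = (starRingEnd ℂ) lam * q := by
      rw [← hconj v₀ (lam • v₀), map_smul, smul_eq_mul, map_mul, hqconj]
    have e2 : B v₀ (lam • v₀) = lam * q := by simp [← hq]
    rw [e1, e2] at h0
    have : ((starRingEnd ℂ) lam * q + lam * q).re = 2 * lam.re * q.re := by
      simp [Complex.mul_re, Complex.add_re, hqim, Complex.conj_re, Complex.conj_im]
      ring
    rw [this] at h0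
    nlinarith
  have hqne : q ≠ 0 := fun h => by simp [h] at hqre
  -- the subspace W
  set W : Submodule ℂ V := LinearMap.ker (B v₀) with hW
  have hdimW : Module.finrank ℂ ↥W = m - 1 := by
    have h1 : Module.finrank ℂ ↥(LinearMap.range (B v₀)) + Module.finrank ℂ ↥W =
        Module.finrank ℂ V := LinearMap.finrank_range_add_finrank_ker (B v₀)
    have h2 : Module.finrank ℂ ↥(LinearMap.range (B v₀)) = 1 := by
      have hne : LinearMap.range (B v₀) ≠ ⊥ := by
        intro h
        have : B v₀ v₀ = 0 := by
          have : B v₀ v₀ ∈ LinearMap.range (B v₀) := LinearMap.mem_range_self _ v₀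
          rw [h] at this
          simpa using this
        exact hqne this
      have hle : Module.finrank ℂ ↥(LinearMap.range (B v₀)) ≤ 1 := by
        simpa using Submodule.finrank_le (LinearMap.range (B v₀))
      have hpos : 0 < Module.finrank ℂ ↥(LinearMap.range (B v₀)) := by
        rw [Module.finrank_pos_iff]
        exact Submodule.nontrivial_iff_ne_bot.mpr hne
      omega
    omega
  -- the compressed operator
  set g : V →ₗ[ℂ] V := f - LinearMap.smulRight (q⁻¹ • ((B v₀).comp f)) v₀ with hg
  have hgapply : ∀ u : V, g u = f u - (q⁻¹ * B v₀ (f u)) • v₀ := by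
    intro u
    simp [hg, smul_smul]
  have hgW : ∀ u : V, g u ∈ W := by
    intro u
    rw [LinearMap.mem_ker, hgapply, map_sub, map_smul, ← hq, smul_eq_mul]
    rw [mul_comm q⁻¹, mul_assoc, inv_mul_cancel₀ hqne, mul_one, sub_self]
  set fbar : ↥W →ₗ[ℂ] ↥W := g.restrict (fun x _ => hgW x) with hfbar
  have hfbar_coe : ∀ w : ↥W, (fbar w : V) = g ↑w := fun w => rfl
  set Bbar : ↥W → ↥W →ₗ[ℂ] ℂ := fun w => (B ↑w).comp W.subtype with hBbar
  have hBv₀ : ∀ w : ↥W, B v₀ ↑w = 0 := fun w => w.2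
  have hBv₀' : ∀ w : ↥W, B ↑w v₀ = 0 := by
    intro w
    rw [← hconj v₀ ↑w, hBv₀]
    simp
  have hBg : ∀ w u : ↥W, B ↑w (g ↑u) = B ↑w (f ↑u) := by
    intro w u
    rw [hgapply, map_sub, map_smul, hBv₀']
    simp
  -- eigenvalues of fbar
  have heigbar : ∀ μ : ℂ, Module.End.HasEigenvalue fbar μ → μ.re < 0 := by
    intro μ hμ
    obtain ⟨w, hw⟩ := hμ.exists_hasEigenvector
    have hwne : (w : V) ≠ 0 := fun h => hw.2 (Subtype.ext h)
    have hgw : g ↑w = μ • ↑w := by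
      have := hw.apply_eq_smul
      have := congrArg (Subtype.val) this
      simpa [hfbar_coe] using this
    set c : ℂ := q⁻¹ * B v₀ (f ↑w) with hc
    have hfw : f ↑w = μ • (↑w : V) + c • v₀ := by
      have := hgapply ↑w
      rw [hgw] at this
      rw [this]
      module
    by_cases hmueq : μ = lam
    · rw [hmueq]; exact hlamre
    · have hne : lam - μ ≠ 0 := sub_ne_zero.mpr (Ne.symm hmueq)
      set u : V := ↑w - (c / (lam - μ)) • v₀ with hu
      have hfu : f u = μ • u := by
        rw [hu, map_sub, map_smul, hfw, hfv₀]
        match_scalars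
        · ring
        · field_simp
          ring
      have hune : u ≠ 0 := by
        intro h
        have h2 : (↑w : V) = (c / (lam - μ)) • v₀ := by
          rw [hu] at h
          linear_combination (norm := module) h
        have h3 : B v₀ ↑w = (c / (lam - μ)) * q := by rw [h2, map_smul]; simp [← hq]
        rw [hBv₀] at h3
        have hc0 : c / (lam - μ) = 0 := by
          rcases mul_eq_zero.mp h3.symm with h | h
          · exact h
          · exact absurd h hqne
        rw [hc0, zero_smul] at h2
        exact hwne h2
      exact heig μ (Module.End.hasEigenvalue_of_hasEigenvector
        ⟨Module.End.mem_eigenspace_iff.mpr hfu, hune⟩)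
  -- Lyapunov for fbar
  have hLbar : ∀ w : ↥W, w ≠ 0 → ((Bbar (fbar w)) w + (Bbar w) (fbar w)).re < 0 := by
    intro w hwne
    have hwne' : (w : V) ≠ 0 := fun h => hwne (Subtype.ext h)
    have e2 : (Bbar w) (fbar w) = B ↑w (f ↑w) := by
      simp only [hBbar, LinearMap.comp_apply, Submodule.subtype_apply]
      rw [hfbar_coe, hBg]
    have e1 : (Bbar (fbar w)) w = B (f ↑w) ↑w := by
      simp only [hBbar, LinearMap.comp_apply, Submodule.subtype_apply]
      rw [hfbar_coe]
      rw [← hconj ↑w (g ↑w), hBg, hconj]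
    rw [e1, e2]
    exact hL ↑w hwne'
  have IHW : ∀ w : ↥W, w ≠ 0 → 0 < ((Bbar w) w).re := by
    refine IH (m - 1) (by omega) ↥W hdimW fbar Bbar ?_ heigbar hLbar
    intro w u
    simp only [hBbar, LinearMap.comp_apply, Submodule.subtype_apply]
    exact hconj ↑w ↑u
  -- decompose v
  set c : ℂ := q⁻¹ * B v₀ v with hc
  set w : V := v - c • v₀ with hwdef
  have hwW : w ∈ W := by
    rw [LinearMap.mem_ker, hwdef, map_sub, map_smul, ← hq, hc, smul_eq_mul]
    field_simp
    simp
  have hBwv₀ : B w v₀ = 0 := by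
    rw [← hconj v₀ w, hwW]
    simp
  have hBvv : B v v = B w w + (Complex.normSq c : ℂ) * q := by
    have hv' : v = w + c • v₀ := by rw [hwdef]; module
    have t1 : B v v = B v w + c * B v v₀ := by
      conv_lhs => rw [show (B v) v = (B v) (w + c • v₀) by rw [← hv']]
      rw [map_add, map_smul]; simp
    have t2 : B v v₀ = (starRingEnd ℂ) c * q := by
      rw [← hconj v₀ v]
      conv_lhs => rw [show (B v₀) v = c * q by
        have : B v₀ v = B v₀ w + c * q := by
          conv_lhs => rw [show (B v₀) v = (B v₀) (w + c • v₀) by rw [← hv']]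
          rw [map_add, map_smul]; simp [← hq]
        rw [hwW] at this
        simpa using this]
      rw [map_mul, hqconj]
    have t3 : B v w = B w w := by
      rw [← hconj w v]
      conv_lhs => rw [show (B w) v = B w w by
        conv_lhs => rw [show (B w) v = (B w) (w + c • v₀) by rw [← hv']]
        rw [map_add, map_smul, hBwv₀]
        simp]
      rw [hconj]
    rw [t1, t2, t3,
      show c * ((starRingEnd ℂ) c * q) = c * (starRingEnd ℂ) c * q from by ring,
      Complex.mul_conj]
  by_cases hw0 : w = 0
  · have hvc : v = c • v₀ := by rw [hwdef] at hw0; linear_combination (norm := module) hw0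
    have hcne : c ≠ 0 := by
      intro h; rw [h, zero_smul] at hvc; exact hv hvc
    rw [hBvv, hw0]
    simp only [map_zero]
    have : ((Complex.normSq c : ℂ) * q).re = Complex.normSq c * q.re := by
      rw [Complex.re_ofReal_mul]
    rw [zero_add, this]
    exact mul_pos (Complex.normSq_pos.mpr hcne) hqre
  · have h1 : 0 < (B w w).re := by
      have := IHW ⟨w, hwW⟩ (by simpa [Submodule.mk_eq_zero] using hw0)
      simpa [hBbar] using this
    rw [hBvv]
    rw [Complex.add_re, Complex.re_ofReal_mul]
    have : 0 ≤ Complex.normSq c * q.re := mul_nonneg (Complex.normSq_nonneg c) (le_of_lt hqre)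
    linarith

open Matrix

noncomputable def Bform {n : ℕ} (Q : Matrix (Fin n) (Fin n) ℂ) (v : Fin n → ℂ) :
    (Fin n → ℂ) →ₗ[ℂ] ℂ where
  toFun w := star v ⬝ᵥ Q *ᵥ w
  map_add' w₁ w₂ := by simp only [Matrix.mulVec_add, dotProduct_add]
  map_smul' c w := by simp only [Matrix.mulVec_smul, dotProduct_smul, smul_eq_mul, RingHom.id_apply]

lemma Bform_apply {n : ℕ} (Q : Matrix (Fin n) (Fin n) ℂ) (v w : Fin n → ℂ) :
    Bform Q v w = star v ⬝ᵥ Q *ᵥ w := rfl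

lemma conj_sesq {n : ℕ} (P : Matrix (Fin n) (Fin n) ℝ) (hP : P.IsSymm) (v w : Fin n → ℂ) :
    (starRingEnd ℂ) (Bform (P.map (algebraMap ℝ ℂ)) v w) = Bform (P.map (algebraMap ℝ ℂ)) w v := by
  simp only [Bform_apply, dotProduct, Matrix.mulVec, Matrix.map_apply, Pi.star_apply,
    Finset.mul_sum, map_sum, _root_.map_mul]
  rw [Finset.sum_comm]
  refine Finset.sum_congr rfl fun i _ => Finset.sum_congr rfl fun j _ => ?_
  have hsymm : P j i = P i j := by
    conv_lhs => rw [← hP]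
    rfl
  rw [hsymm]
  simp only [RCLike.star_def, Complex.conj_conj, Complex.conj_ofReal, Complex.conj_ofReal,
    RingHom.coe_coe, Complex.coe_algebraMap, Complex.conj_ofReal]
  ring

lemma re_sesq {n : ℕ} (S : Matrix (Fin n) (Fin n) ℝ) (v : Fin n → ℂ) :
    (star v ⬝ᵥ (S.map (algebraMap ℝ ℂ)) *ᵥ v).re =
      (fun i => (v i).re) ⬝ᵥ S *ᵥ (fun i => (v i).re) +
      (fun i => (v i).im) ⬝ᵥ S *ᵥ (fun i => (v i).im) := by
  simp only [dotProduct, Matrix.mulVec, Matrix.map_apply, Pi.star_apply,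
    Finset.mul_sum, Complex.re_sum]
  rw [← Finset.sum_add_distrib]
  refine Finset.sum_congr rfl fun i _ => ?_
  rw [← Finset.sum_add_distrib]
  refine Finset.sum_congr rfl fun j _ => ?_
  simp only [RCLike.star_def, Complex.coe_algebraMap, Complex.mul_re, Complex.mul_im,
    Complex.conj_re, Complex.conj_im, Complex.ofReal_re, Complex.ofReal_im]
  ring

lemma conjT_map {n : ℕ} (M : Matrix (Fin n) (Fin n) ℝ) :
    (M.map (algebraMap ℝ ℂ))ᴴ = Mᵀ.map (algebraMap ℝ ℂ) := by
  ext i j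
  simp [Matrix.conjTranspose_apply, Complex.conj_ofReal]

lemma root_iff_eig {n : ℕ} (M : Matrix (Fin n) (Fin n) ℂ) (z : ℂ) :
    M.charpoly.IsRoot z ↔ ∃ v : Fin n → ℂ, v ≠ 0 ∧ M *ᵥ v = z • v := by
  have hdet : M.charpoly.eval z = (z • (1 : Matrix (Fin n) (Fin n) ℂ) - M).det := by
    rw [Matrix.charpoly, ← Polynomial.coe_evalRingHom, RingHom.map_det]
    congr 1
    ext i j
    by_cases h : i = j <;>
      simp [h, Matrix.charmatrix_apply, Matrix.one_apply, Matrix.diagonal_apply]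
  constructor
  · intro hr
    have : (z • (1 : Matrix (Fin n) (Fin n) ℂ) - M).det = 0 := by
      rw [← hdet]; exact hr
    obtain ⟨v, hvne, hv⟩ := (Matrix.exists_mulVec_eq_zero_iff).mpr this
    refine ⟨v, hvne, ?_⟩
    rw [Matrix.sub_mulVec, Matrix.smul_mulVec, Matrix.one_mulVec, sub_eq_zero] at hv
    exact hv.symm
  · rintro ⟨v, hvne, hv⟩
    have : (z • (1 : Matrix (Fin n) (Fin n) ℂ) - M) *ᵥ v = 0 := by
      rw [Matrix.sub_mulVec, Matrix.smul_mulVec, Matrix.one_mulVec, hv, sub_self]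
    have hd := (Matrix.exists_mulVec_eq_zero_iff).mp ⟨v, hvne, this⟩
    rw [Polynomial.IsRoot, hdet]
    exact hd

lemma hL_complex {n : ℕ} (M P : Matrix (Fin n) (Fin n) ℝ)
    (hreal : ∀ x : Fin n → ℝ, x ≠ 0 → x ⬝ᵥ (P * M + Mᵀ * P) *ᵥ x < 0) :
    ∀ v : Fin n → ℂ, v ≠ 0 →
      ((Bform (P.map (algebraMap ℝ ℂ)) ((M.map (algebraMap ℝ ℂ)) *ᵥ v)) v
        + (Bform (P.map (algebraMap ℝ ℂ)) v) ((M.map (algebraMap ℝ ℂ)) *ᵥ v)).re < 0 := by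
  intro v hv
  have e1 : Bform (P.map (algebraMap ℝ ℂ)) ((M.map (algebraMap ℝ ℂ)) *ᵥ v) v
      = star v ⬝ᵥ ((Mᵀ * P).map (algebraMap ℝ ℂ)) *ᵥ v := by
    rw [Bform_apply, Matrix.star_mulVec, Matrix.dotProduct_mulVec, Matrix.vecMul_vecMul,
      ← Matrix.dotProduct_mulVec, conjT_map, ← Matrix.map_mul]
  have e2 : Bform (P.map (algebraMap ℝ ℂ)) v ((M.map (algebraMap ℝ ℂ)) *ᵥ v)
      = star v ⬝ᵥ ((P * M).map (algebraMap ℝ ℂ)) *ᵥ v := by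
    rw [Bform_apply, Matrix.mulVec_mulVec, ← Matrix.map_mul]
  rw [e1, e2, ← dotProduct_add, ← Matrix.add_mulVec, ← Matrix.map_add _ (map_add (algebraMap ℝ ℂ)),
    show Mᵀ * P + P * M = P * M + Mᵀ * P from add_comm _ _, re_sesq]
  set x : Fin n → ℝ := fun i => (v i).re with hx
  set y : Fin n → ℝ := fun i => (v i).im with hy
  have hxy : x ≠ 0 ∨ y ≠ 0 := by
    by_contra h
    push_neg at h
    apply hv
    funext i
    have h1 : x i = 0 := by rw [h.1]; rfl
    have h2 : y i = 0 := by rw [h.2]; rfl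
    exact Complex.ext h1 h2
  rcases hxy with h | h
  · rcases eq_or_ne y 0 with hy0 | hy0
    · rw [hy0]
      simpa using hreal x h
    · have := hreal x h
      have := hreal y hy0
      linarith
  · rcases eq_or_ne x 0 with hx0 | hx0
    · rw [hx0]
      simpa using hreal y h
    · have := hreal x hx0
      have := hreal y h
      linarith

open Matrix

def IsHurwitz {n : ℕ} (M : Matrix (Fin n) (Fin n) ℝ) : Prop :=
  ∀ z : ℂ, (M.map (algebraMap ℝ ℂ)).charpoly.IsRoot z → z.re < 0

theorem stmt_6 (n : ℕ) (F H : Matrix (Fin n) (Fin n) ℝ) (hH : H.rank = 1)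
    (α₁ α₂ : ℝ)
    (h1 : IsHurwitz (F + α₁ • H)) (h2 : IsHurwitz (F + α₂ • H))
    (P : Matrix (Fin n) (Fin n) ℝ) (hP : P.IsSymm)
    (hLyap : ∀ α ∈ ({α₁, α₂} : Set ℝ), ∀ x : Fin n → ℝ, x ≠ 0 →
      x ⬝ᵥ (P * (F + α • H) + (F + α • H)ᵀ * P) *ᵥ x < 0) :
    ∀ l : ℝ, l ∈ Set.Icc (0 : ℝ) 1 →
      IsHurwitz (l • (F + α₁ • H) + (1 - l) • (F + α₂ • H)) := by
  intro l hl z hz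
  obtain ⟨hl0, hl1⟩ := hl
  set A₁ := F + α₁ • H with hA₁
  set A₂ := F + α₂ • H with hA₂
  set A := l • A₁ + (1 - l) • A₂ with hA
  have hLA₁ : ∀ x : Fin n → ℝ, x ≠ 0 → x ⬝ᵥ (P * A₁ + A₁ᵀ * P) *ᵥ x < 0 := by
    intro x hx
    have := hLyap α₁ (by simp) x hx
    rw [← hA₁] at this
    exact this
  have hLA₂ : ∀ x : Fin n → ℝ, x ≠ 0 → x ⬝ᵥ (P * A₂ + A₂ᵀ * P) *ᵥ x < 0 := by
    intro x hx
    have := hLyap α₂ (by simp) x hx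
    rw [← hA₂] at this
    exact this
  have hLA : ∀ x : Fin n → ℝ, x ≠ 0 → x ⬝ᵥ (P * A + Aᵀ * P) *ᵥ x < 0 := by
    intro x hx
    have h₁ := hLA₁ x hx
    have h₂ := hLA₂ x hx
    have hexp : P * A + Aᵀ * P = l • (P * A₁ + A₁ᵀ * P) + (1 - l) • (P * A₂ + A₂ᵀ * P) := by
      rw [hA]
      simp only [Matrix.mul_add, Matrix.add_mul, Matrix.transpose_add, Matrix.transpose_smul,
        Matrix.mul_smul, Matrix.smul_mul, smul_add]
      abel
    have hdp : x ⬝ᵥ (l • (P * A₁ + A₁ᵀ * P) + (1 - l) • (P * A₂ + A₂ᵀ * P)) *ᵥ x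
        = l * (x ⬝ᵥ (P * A₁ + A₁ᵀ * P) *ᵥ x) + (1 - l) * (x ⬝ᵥ (P * A₂ + A₂ᵀ * P) *ᵥ x) := by
      rw [Matrix.add_mulVec, dotProduct_add, Matrix.smul_mulVec, Matrix.smul_mulVec,
        dotProduct_smul, dotProduct_smul, smul_eq_mul, smul_eq_mul]
    rw [hexp, hdp]
    rcases eq_or_lt_of_le hl0 with h0 | h0
    · rw [← h0]
      simpa using h₂
    · have t1 : l * (x ⬝ᵥ (P * A₁ + A₁ᵀ * P) *ᵥ x) < 0 := mul_neg_of_pos_of_neg h0 h₁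
      have t2 : (1 - l) * (x ⬝ᵥ (P * A₂ + A₂ᵀ * P) *ᵥ x) ≤ 0 :=
        mul_nonpos_of_nonneg_of_nonpos (by linarith) h₂.le
      linarith
  -- positive definiteness of P (as a Hermitian form) from the Hurwitz vertex α₁
  have hPpos : ∀ v : Fin n → ℂ, v ≠ 0 → 0 < ((Bform (P.map (algebraMap ℝ ℂ)) v) v).re := by
    refine key_pos n (Fin n → ℂ) (by simp) (Matrix.mulVecLin (A₁.map (algebraMap ℝ ℂ)))
      (Bform (P.map (algebraMap ℝ ℂ))) (fun v w => conj_sesq P hP v w) ?_ ?_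
    · intro μ hμ
      obtain ⟨v, hv⟩ := hμ.exists_hasEigenvector
      have hroot : (A₁.map (algebraMap ℝ ℂ)).charpoly.IsRoot μ := by
        refine (root_iff_eig _ μ).mpr ⟨v, hv.2, ?_⟩
        have := hv.apply_eq_smul
        simpa [Matrix.mulVecLin_apply] using this
      exact h1 μ hroot
    · intro v hv
      simpa [Matrix.mulVecLin_apply] using hL_complex A₁ P hLA₁ v hv
  -- eigenvector for z
  obtain ⟨v, hvne, hv⟩ := (root_iff_eig (A.map (algebraMap ℝ ℂ)) z).mp hz
  have hLz := hL_complex A P hLA v hvne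
  rw [hv] at hLz
  set q : ℂ := Bform (P.map (algebraMap ℝ ℂ)) v v with hq
  have hqconj : (starRingEnd ℂ) q = q := conj_sesq P hP v v
  have hqim : q.im = 0 := by
    have := congrArg Complex.im hqconj
    simpa using by linarith [this, Complex.conj_im q]
  have hqre : 0 < q.re := hPpos v hvne
  have e1 : Bform (P.map (algebraMap ℝ ℂ)) (z • v) v = (starRingEnd ℂ) z * q := by
    rw [← conj_sesq P hP v (z • v), _root_.map_smul, smul_eq_mul, _root_.map_mul, hqconj]
  have e2 : Bform (P.map (algebraMap ℝ ℂ)) v (z • v) = z * q := by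
    rw [_root_.map_smul, smul_eq_mul]
  rw [e1, e2] at hLz
  have hre : ((starRingEnd ℂ) z * q + z * q).re = 2 * z.re * q.re := by
    simp [Complex.mul_re, Complex.add_re, hqim, Complex.conj_re, Complex.conj_im]
    ring
  rw [hre] at hLz
  nlinarith
end

section
/- Let A, B be real n×n matrices, both Hurwitz stable, and suppose there exists a symmetric matrix P = Pᵀ with PA + AᵀP < 0 and PB + BᵀP < 0. Then PA^{-1} + A^{-T}P < 0, and consequently λA^{-1} + (1−λ)B is Hurwitz stable for all λ ∈ [0,1]. -/
open Matrix

namespace Stmt7Aux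

open Polynomial Filter

variable {n : ℕ}

/-! ### Basic quadratic-form algebra -/

lemma quad_helper (M P N : Matrix (Fin n) (Fin n) ℝ) (u : Fin n → ℝ) :
    (M *ᵥ u) ⬝ᵥ (P *ᵥ (N *ᵥ u)) = u ⬝ᵥ ((Mᵀ * P * N) *ᵥ u) := by
  rw [Matrix.mulVec_mulVec, ← Matrix.vecMul_transpose, Matrix.dotProduct_mulVec u (Mᵀ * P * N) u,
    Matrix.dotProduct_mulVec (u ᵥ* Mᵀ), Matrix.vecMul_vecMul, Matrix.mul_assoc]

lemma dot_add (M N : Matrix (Fin n) (Fin n) ℝ) (x : Fin n → ℝ) :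
    x ⬝ᵥ ((M + N) *ᵥ x) = x ⬝ᵥ (M *ᵥ x) + x ⬝ᵥ (N *ᵥ x) := by
  rw [Matrix.add_mulVec, dotProduct_add]

/-! ### Eigenvalues and the characteristic polynomial over ℂ -/

lemma charpoly_eval (M : Matrix (Fin n) (Fin n) ℂ) (z : ℂ) :
    M.charpoly.eval z = (z • (1 : Matrix (Fin n) (Fin n) ℂ) - M).det := by
  have hcm : (charmatrix M).map (eval z) = z • (1 : Matrix (Fin n) (Fin n) ℂ) - M := by
    ext i j
    by_cases h : i = j <;>
      simp [h, charmatrix_apply_eq, charmatrix_apply_ne, Matrix.one_apply, Ne.symm]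
  rw [Matrix.charpoly, ← hcm, ← Polynomial.coe_evalRingHom, ← RingHom.mapMatrix_apply,
    ← RingHom.map_det]

lemma isRoot_charpoly_iff (M : Matrix (Fin n) (Fin n) ℂ) (z : ℂ) :
    M.charpoly.IsRoot z ↔ ∃ v ≠ 0, M *ᵥ v = z • v := by
  rw [Polynomial.IsRoot, charpoly_eval, ← Matrix.exists_mulVec_eq_zero_iff]
  constructor
  · rintro ⟨v, hv, h⟩
    refine ⟨v, hv, ?_⟩
    rw [Matrix.sub_mulVec, sub_eq_zero] at h
    rw [← h, Matrix.smul_mulVec, Matrix.one_mulVec]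
  · rintro ⟨v, hv, h⟩
    refine ⟨v, hv, ?_⟩
    rw [Matrix.sub_mulVec, sub_eq_zero, h, Matrix.smul_mulVec, Matrix.one_mulVec]

lemma mem_spectrum_iff_root (M : Matrix (Fin n) (Fin n) ℂ) (z : ℂ) :
    z ∈ spectrum ℂ M ↔ M.charpoly.IsRoot z := by
  rw [spectrum.mem_iff, Polynomial.IsRoot, charpoly_eval, Matrix.isUnit_iff_isUnit_det]
  rw [isUnit_iff_ne_zero, not_ne_iff]
  constructor
  · intro h; convert h using 2
    simp [Algebra.algebraMap_eq_smul_one]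
  · intro h; convert h using 2
    simp [Algebra.algebraMap_eq_smul_one]

/-! ### Determinant facts for Hurwitz matrices -/

lemma hurwitz_isUnit_det (A : Matrix (Fin n) (Fin n) ℝ) (hA : IsHurwitz A) : IsUnit A.det := by
  rw [isUnit_iff_ne_zero]
  intro h
  have h' : (A.map (algebraMap ℝ ℂ)).det = 0 := by
    rw [← RingHom.mapMatrix_apply, ← RingHom.map_det, h, map_zero]
  obtain ⟨v, hv, hAv⟩ := Matrix.exists_mulVec_eq_zero_iff.mpr h'
  have hroot : (A.map (algebraMap ℝ ℂ)).charpoly.IsRoot 0 :=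
    (isRoot_charpoly_iff _ 0).mpr ⟨v, hv, by simpa using hAv⟩
  simpa using hA 0 hroot

lemma hurwitz_isUnit_det_sub_one (A : Matrix (Fin n) (Fin n) ℝ) (hA : IsHurwitz A) :
    IsUnit (A - 1).det := by
  rw [isUnit_iff_ne_zero]
  intro h
  have h' : (A.map (algebraMap ℝ ℂ) - 1).det = 0 := by
    have : A.map (algebraMap ℝ ℂ) - 1 = (algebraMap ℝ ℂ).mapMatrix (A - 1) := by
      simp [map_sub]
    rw [this, ← RingHom.map_det, h, map_zero]
  obtain ⟨v, hv, hAv⟩ := Matrix.exists_mulVec_eq_zero_iff.mpr h'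
  have hAv' : (A.map (algebraMap ℝ ℂ)) *ᵥ v = (1 : ℂ) • v := by
    rw [Matrix.sub_mulVec, sub_eq_zero] at hAv
    rw [hAv, Matrix.one_mulVec, one_smul]
  have hroot : (A.map (algebraMap ℝ ℂ)).charpoly.IsRoot 1 :=
    (isRoot_charpoly_iff _ 1).mpr ⟨v, hv, hAv'⟩
  have := hA 1 hroot
  norm_num at this

/-! ### Part 1: the Lyapunov inequality passes to the inverse -/

lemma part1_aux (A P : Matrix (Fin n) (Fin n) ℝ) (hdet : IsUnit A.det)
    (hPA : ∀ x : Fin n → ℝ, x ≠ 0 → x ⬝ᵥ (P * A + Aᵀ * P) *ᵥ x < 0) :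
    ∀ x : Fin n → ℝ, x ≠ 0 → x ⬝ᵥ (P * A⁻¹ + (A⁻¹)ᵀ * P) *ᵥ x < 0 := by
  intro x hx
  have hinv : A⁻¹ * A = 1 := Matrix.nonsing_inv_mul A hdet
  set y := A⁻¹ *ᵥ x with hy
  have hxy : A *ᵥ y = x := by
    rw [hy, Matrix.mulVec_mulVec, Matrix.mul_nonsing_inv A hdet, Matrix.one_mulVec]
  have hyne : y ≠ 0 := by
    intro h; apply hx; rw [← hxy, h, Matrix.mulVec_zero]
  have h1 : Aᵀ * (P * A⁻¹) * A = Aᵀ * P := by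
    rw [Matrix.mul_assoc, Matrix.mul_assoc, hinv, Matrix.mul_one]
  have h2 : Aᵀ * ((A⁻¹)ᵀ * P) * A = P * A := by
    rw [← Matrix.mul_assoc Aᵀ (A⁻¹)ᵀ P, ← Matrix.transpose_mul, hinv, Matrix.transpose_one,
      Matrix.one_mul]
  have key : x ⬝ᵥ (P * A⁻¹ + (A⁻¹)ᵀ * P) *ᵥ x = y ⬝ᵥ (P * A + Aᵀ * P) *ᵥ y := by
    rw [← hxy, dot_add, dot_add, quad_helper A (P * A⁻¹) A y, quad_helper A ((A⁻¹)ᵀ * P) A y,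
      h1, h2]
    exact add_comm _ _
  rw [key]; exact hPA y hyne

/-! ### The Stein inequality for the Cayley transform -/

lemma stein_aux (A P : Matrix (Fin n) (Fin n) ℝ) (hdet : IsUnit (A - 1).det)
    (hPA : ∀ x : Fin n → ℝ, x ≠ 0 → x ⬝ᵥ (P * A + Aᵀ * P) *ᵥ x < 0) :
    ∀ x : Fin n → ℝ, x ≠ 0 →
      (((A - 1)⁻¹ * (A + 1)) *ᵥ x) ⬝ᵥ (P *ᵥ (((A - 1)⁻¹ * (A + 1)) *ᵥ x)) < x ⬝ᵥ (P *ᵥ x) := by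
  intro x hx
  set u := (A - 1)⁻¹ *ᵥ x with hu
  have hxu : (A - 1) *ᵥ u = x := by
    rw [hu, Matrix.mulVec_mulVec, Matrix.mul_nonsing_inv _ hdet, Matrix.one_mulVec]
  have hune : u ≠ 0 := by
    intro h; apply hx; rw [← hxu, h, Matrix.mulVec_zero]
  have hcomm : (A + 1) * (A - 1) = (A - 1) * (A + 1) := by noncomm_ring
  have hCx : ((A - 1)⁻¹ * (A + 1)) *ᵥ x = (A + 1) *ᵥ u := by
    conv_lhs => rw [← hxu]
    rw [Matrix.mulVec_mulVec, Matrix.mul_assoc, hcomm, ← Matrix.mul_assoc,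
      Matrix.nonsing_inv_mul _ hdet, Matrix.one_mul]
  have hmat : (A + 1)ᵀ * P * (A + 1) - (A - 1)ᵀ * P * (A - 1)
      = (P * A + Aᵀ * P) + (P * A + Aᵀ * P) := by
    simp only [Matrix.transpose_add, Matrix.transpose_sub, Matrix.transpose_one]
    noncomm_ring
  have key : ((A + 1) *ᵥ u) ⬝ᵥ (P *ᵥ ((A + 1) *ᵥ u)) - ((A - 1) *ᵥ u) ⬝ᵥ (P *ᵥ ((A - 1) *ᵥ u))
      = u ⬝ᵥ ((P * A + Aᵀ * P) *ᵥ u) + u ⬝ᵥ ((P * A + Aᵀ * P) *ᵥ u) := by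
    rw [quad_helper (A + 1) P (A + 1) u, quad_helper (A - 1) P (A - 1) u,
      ← dotProduct_sub, ← Matrix.sub_mulVec, hmat, dot_add]
  have hneg := hPA u hune
  rw [hCx, ← hxu]
  linarith [key]

/-! ### Analysis: powers of a matrix with spectral radius < 1 tend to 0 -/

attribute [local instance] Matrix.linftyOpNormedRing Matrix.linftyOpNormedAlgebra

noncomputable instance : CompleteSpace (Matrix (Fin n) (Fin n) ℂ) :=
  FiniteDimensional.complete ℂ _

lemma cayley_eig (A : Matrix (Fin n) (Fin n) ℝ) (hA : IsHurwitz A) (z : ℂ)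
    (hz : z ∈ spectrum ℂ (((A - 1)⁻¹ * (A + 1)).map (algebraMap ℝ ℂ))) : ‖z‖ < 1 := by
  have hdet := hurwitz_isUnit_det_sub_one A hA
  have hrel : (A - 1) * ((A - 1)⁻¹ * (A + 1)) = A + 1 := by
    rw [← Matrix.mul_assoc, Matrix.mul_nonsing_inv _ hdet, Matrix.one_mul]
  have hrel' : (A.map (algebraMap ℝ ℂ) - 1) * (((A - 1)⁻¹ * (A + 1)).map (algebraMap ℝ ℂ))
      = A.map (algebraMap ℝ ℂ) + 1 := by
    have := congrArg (algebraMap ℝ ℂ).mapMatrix hrel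
    simp only [_root_.map_mul, _root_.map_sub, _root_.map_add, _root_.map_one,
      RingHom.mapMatrix_apply] at this
    rw [Matrix.map_mul]
    have hA1 : (A + 1).map ⇑(algebraMap ℝ ℂ) = (algebraMap ℝ ℂ).mapMatrix (A + 1) := rfl
    rw [hA1, _root_.map_add, _root_.map_one, RingHom.mapMatrix_apply]
    exact this
  rw [mem_spectrum_iff_root, isRoot_charpoly_iff] at hz
  obtain ⟨v, hv, hCv⟩ := hz
  set A' := A.map (algebraMap ℝ ℂ) with hA'
  have h1 : (A' - 1) *ᵥ (z • v) = (A' + 1) *ᵥ v := by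
    rw [← hCv, Matrix.mulVec_mulVec, hrel']
  rw [Matrix.sub_mulVec, Matrix.add_mulVec, Matrix.one_mulVec, Matrix.one_mulVec,
    Matrix.mulVec_smul] at h1
  have h1' : z • (A' *ᵥ v) = (A' *ᵥ v) + v + z • v := eq_add_of_sub_eq h1
  have h2 : (z - 1) • (A' *ᵥ v) = (z + 1) • v := by
    rw [sub_smul, add_smul, one_smul, one_smul, h1']
    abel
  have hz1 : z ≠ 1 := by
    intro h
    rw [h] at h2
    have h3 : ((1:ℂ) + 1) • v = 0 := by simpa using h2.symm
    rcases smul_eq_zero.mp h3 with h4 | h4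
    · norm_num at h4
    · exact hv h4
  have hz1' : z - 1 ≠ 0 := sub_ne_zero.mpr hz1
  have heig : A' *ᵥ v = ((z + 1) / (z - 1)) • v := by
    have := congrArg (fun w => (z - 1)⁻¹ • w) h2
    simpa [smul_smul, inv_mul_cancel₀ hz1', div_eq_inv_mul, mul_comm] using this
  have hroot : A'.charpoly.IsRoot ((z + 1) / (z - 1)) :=
    (isRoot_charpoly_iff _ _).mpr ⟨v, hv, heig⟩
  have hre := hA _ hroot
  have hnsq : 0 < Complex.normSq (z - 1) := Complex.normSq_pos.mpr hz1'
  rw [Complex.div_re, ← add_div] at hre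
  have hnum : (z + 1).re * (z - 1).re + (z + 1).im * (z - 1).im < 0 := by
    by_contra hcon
    push_neg at hcon
    have := div_nonneg hcon hnsq.le
    linarith
  have hsq : z.re * z.re + z.im * z.im < 1 := by
    simp only [Complex.add_re, Complex.sub_re, Complex.add_im, Complex.sub_im,
      Complex.one_re, Complex.one_im] at hnum
    nlinarith [hnum]
  have habs2 : ‖z‖ ^ 2 < 1 := by
    rw [Complex.sq_norm, Complex.normSq_apply]
    linarith
  have habs : ‖z‖ < 1 := by nlinarith [norm_nonneg z]
  simpa using habs

lemma specRadius_lt_one (M : Matrix (Fin n) (Fin n) ℂ)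
    (h : ∀ z ∈ spectrum ℂ M, ‖z‖ < 1) : spectralRadius ℂ M < 1 := by
  have hfin : (spectrum ℂ M).Finite := by
    have hsub : spectrum ℂ M ⊆ {z | M.charpoly.IsRoot z} := fun z hz =>
      (mem_spectrum_iff_root M z).mp hz
    exact Set.Finite.subset (Polynomial.finite_setOf_isRoot M.charpoly_monic.ne_zero) hsub
  rw [spectralRadius]
  rcases Set.eq_empty_or_nonempty (spectrum ℂ M) with he | hne
  · rw [he]
    simp
  · have himg : ((fun z => (‖z‖₊ : ENNReal)) '' spectrum ℂ M).Finite := hfin.image _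
    have himgne : ((fun z => (‖z‖₊ : ENNReal)) '' spectrum ℂ M).Nonempty := hne.image _
    have hmem := himgne.csSup_mem himg
    rw [← sSup_image]
    obtain ⟨z, hz, hzs⟩ := hmem
    rw [← hzs]
    have := h z hz
    have h1 : ‖z‖₊ < 1 := by rwa [← coe_nnnorm, NNReal.coe_lt_one] at this
    show ((‖z‖₊ : ENNReal)) < 1
    exact_mod_cast h1

lemma pow_norm_tendsto_zero (M : Matrix (Fin n) (Fin n) ℂ) (h : spectralRadius ℂ M < 1) :
    Tendsto (fun k : ℕ => ‖M ^ k‖) atTop (nhds 0) := by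
  obtain ⟨r, hr1, hr2⟩ := exists_between h
  have hgel := spectrum.pow_nnnorm_pow_one_div_tendsto_nhds_spectralRadius M
  have hev : ∀ᶠ k : ℕ in atTop, (‖M ^ k‖₊ : ENNReal) ^ (1 / (k:ℝ)) < r :=
    hgel.eventually_lt_const hr1
  have hev2 : ∀ᶠ k : ℕ in atTop, (‖M ^ k‖₊ : ENNReal) ≤ r ^ (k : ℕ) := by
    filter_upwards [hev, eventually_ge_atTop 1] with k hk hk1
    have hk0 : (k : ℝ) ≠ 0 := by positivity
    calc (‖M ^ k‖₊ : ENNReal) = ((‖M ^ k‖₊ : ENNReal) ^ ((k:ℝ))⁻¹) ^ (k:ℝ) := by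
          rw [← ENNReal.rpow_mul, inv_mul_cancel₀ hk0, ENNReal.rpow_one]
      _ ≤ r ^ (k : ℝ) := by
          apply ENNReal.rpow_le_rpow _ (by positivity)
          rw [← one_div]; exact hk.le
      _ = r ^ (k : ℕ) := by rw [ENNReal.rpow_natCast]
  have hpow : Tendsto (fun k : ℕ => r ^ k) atTop (nhds (0 : ENNReal)) :=
    ENNReal.tendsto_pow_atTop_nhds_zero_of_lt_one hr2
  have htends : Tendsto (fun k : ℕ => (‖M ^ k‖₊ : ENNReal)) atTop (nhds 0) := by
    apply tendsto_of_tendsto_of_tendsto_of_le_of_le' tendsto_const_nhds hpow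
    · exact Eventually.of_forall fun k => zero_le
    · exact hev2
  have h2 : Tendsto (fun k : ℕ => ‖M ^ k‖₊) atTop (nhds 0) := by
    rw [← ENNReal.coe_zero] at htends
    exact (ENNReal.tendsto_coe).mp htends
  have h3 : Tendsto (fun k : ℕ => ((‖M ^ k‖₊ : ℝ))) atTop (nhds ((0:NNReal):ℝ)) :=
    (NNReal.tendsto_coe).mpr h2
  simpa [coe_nnnorm] using h3

/-! ### Positive definiteness of the Lyapunov certificate -/

lemma lyap_posdef (A P : Matrix (Fin n) (Fin n) ℝ) (hA : IsHurwitz A)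
    (hPA : ∀ x : Fin n → ℝ, x ≠ 0 → x ⬝ᵥ (P * A + Aᵀ * P) *ᵥ x < 0) :
    ∀ x : Fin n → ℝ, x ≠ 0 → 0 < x ⬝ᵥ P *ᵥ x := by
  intro x hx
  by_contra hle
  push_neg at hle
  set C : Matrix (Fin n) (Fin n) ℝ := (A - 1)⁻¹ * (A + 1) with hC
  have hdet := hurwitz_isUnit_det_sub_one A hA
  have hstein := stein_aux A P hdet hPA
  set a : ℕ → (Fin n → ℝ) := fun k => (C ^ k) *ᵥ x with ha
  have hsucc : ∀ k, a (k + 1) = C *ᵥ (a k) := by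
    intro k
    rw [ha]
    simp only [pow_succ']
    rw [← Matrix.mulVec_mulVec]
  set V : (Fin n → ℝ) → ℝ := fun y => y ⬝ᵥ P *ᵥ y with hV
  have hmono : ∀ k, V (a (k + 1)) ≤ V (a k) := by
    intro k
    rcases eq_or_ne (a k) 0 with h | h
    · rw [hsucc, h, Matrix.mulVec_zero]
    · exact le_of_lt (by rw [hsucc]; exact hstein (a k) h)
  have hanti : Antitone (V ∘ a) := antitone_nat_of_succ_le hmono
  have hC' := specRadius_lt_one (C.map (algebraMap ℝ ℂ)) (cayley_eig A hA)
  have hpow := pow_norm_tendsto_zero _ hC'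
  set xc : Fin n → ℂ := fun i => (x i : ℂ) with hxc
  have hak : ∀ k i, |a k i| ≤ ‖(C.map (algebraMap ℝ ℂ)) ^ k‖ * ‖xc‖ := by
    intro k i
    have hmap : ((C.map (algebraMap ℝ ℂ)) ^ k) *ᵥ xc = fun i => ((a k i : ℂ)) := by
      have h1 : (C.map (algebraMap ℝ ℂ)) ^ k = (C ^ k).map (algebraMap ℝ ℂ) := by
        rw [← RingHom.mapMatrix_apply, ← RingHom.mapMatrix_apply, ← map_pow]
      rw [h1]
      funext j
      exact (RingHom.map_mulVec (algebraMap ℝ ℂ) (C ^ k) x j).symm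
    have h2 : ‖((C.map (algebraMap ℝ ℂ)) ^ k *ᵥ xc) i‖ ≤ ‖(C.map (algebraMap ℝ ℂ)) ^ k *ᵥ xc‖ :=
      norm_le_pi_norm _ i
    have h3 := Matrix.linfty_opNorm_mulVec ((C.map (algebraMap ℝ ℂ)) ^ k) xc
    calc |a k i| = ‖((a k i : ℂ))‖ := by rw [Complex.norm_real, Real.norm_eq_abs]
      _ = ‖((C.map (algebraMap ℝ ℂ)) ^ k *ᵥ xc) i‖ := by rw [congrFun hmap i]
      _ ≤ ‖(C.map (algebraMap ℝ ℂ)) ^ k *ᵥ xc‖ := h2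
      _ ≤ ‖(C.map (algebraMap ℝ ℂ)) ^ k‖ * ‖xc‖ := h3
  have hcomp : ∀ i, Tendsto (fun k => a k i) atTop (nhds 0) := by
    intro i
    apply squeeze_zero_norm (fun k => hak k i)
    simpa using hpow.mul_const ‖xc‖
  have haten : Tendsto a atTop (nhds 0) := by
    rw [tendsto_pi_nhds]
    intro i
    simpa using hcomp i
  have hVcont : Continuous V := by
    simp only [hV, dotProduct, Matrix.mulVec]
    exact continuous_finset_sum _ fun i _ =>
      (continuous_apply i).mul (continuous_finset_sum _ fun j _ =>
        continuous_const.mul (continuous_apply j))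
  have hVlim : Tendsto (V ∘ a) atTop (nhds (V 0)) := (hVcont.tendsto 0).comp haten
  have hV0 : V 0 = 0 := by simp [hV]
  have ha0 : a 0 = x := by simp [ha]
  have ha1lt : V (a 1) < V (a 0) := by
    rw [hsucc 0, ha0]
    exact hstein x hx
  have hallle : ∀ᶠ k in atTop, (V ∘ a) k ≤ V (a 1) := by
    filter_upwards [eventually_ge_atTop 1] with k hk
    exact hanti hk
  have h0le : (0:ℝ) ≤ V (a 1) := by
    rw [hV0] at hVlim
    exact le_of_tendsto hVlim hallle
  rw [ha0] at ha1lt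
  have : V x ≤ 0 := hle
  linarith

/-! ### Lyapunov's criterion -/

lemma lyap_hurwitz (M P : Matrix (Fin n) (Fin n) ℝ) (hP : P.IsSymm)
    (hpos : ∀ x : Fin n → ℝ, x ≠ 0 → 0 < x ⬝ᵥ P *ᵥ x)
    (hQ : ∀ x : Fin n → ℝ, x ≠ 0 → x ⬝ᵥ (P * M + Mᵀ * P) *ᵥ x < 0) :
    IsHurwitz M := by
  have hsym : ∀ u w : Fin n → ℝ, u ⬝ᵥ P *ᵥ w = w ⬝ᵥ P *ᵥ u := by
    intro u w
    rw [Matrix.dotProduct_mulVec, ← Matrix.mulVec_transpose, hP.eq, dotProduct_comm]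
  intro z hz
  obtain ⟨v, hv, hMv⟩ := (isRoot_charpoly_iff _ z).mp hz
  set a : Fin n → ℝ := fun i => (v i).re with haa
  set b : Fin n → ℝ := fun i => (v i).im with hbb
  have hre : M *ᵥ a = z.re • a - z.im • b := by
    funext i
    have h := congrArg Complex.re (congrFun hMv i)
    simp only [Matrix.mulVec, dotProduct, Matrix.map_apply, Pi.smul_apply,
      smul_eq_mul, Complex.mul_re, Complex.re_sum, Complex.ofReal_re, Complex.ofReal_im,
      RingHom.coe_coe, Complex.coe_algebraMap, zero_mul, sub_zero] at h
    simp only [Matrix.mulVec, dotProduct, Pi.sub_apply, Pi.smul_apply, smul_eq_mul, haa, hbb]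
    linarith [h]
  have him : M *ᵥ b = z.im • a + z.re • b := by
    funext i
    have h := congrArg Complex.im (congrFun hMv i)
    simp only [Matrix.mulVec, dotProduct, Matrix.map_apply, Pi.smul_apply,
      smul_eq_mul, Complex.mul_im, Complex.im_sum, Complex.ofReal_re, Complex.ofReal_im,
      RingHom.coe_coe, Complex.coe_algebraMap, zero_mul, add_zero] at h
    simp only [Matrix.mulVec, dotProduct, Pi.add_apply, Pi.smul_apply, smul_eq_mul, haa, hbb]
    linarith [h]
  have hquad : ∀ u : Fin n → ℝ, u ⬝ᵥ ((P * M + Mᵀ * P) *ᵥ u) = 2 * (u ⬝ᵥ P *ᵥ (M *ᵥ u)) := by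
    intro u
    rw [dot_add]
    have h1 : u ⬝ᵥ ((P * M) *ᵥ u) = u ⬝ᵥ P *ᵥ (M *ᵥ u) := by
      rw [← Matrix.mulVec_mulVec]
    have h2 : u ⬝ᵥ ((Mᵀ * P) *ᵥ u) = u ⬝ᵥ P *ᵥ (M *ᵥ u) := by
      have h3 := quad_helper M P 1 u
      rw [Matrix.one_mulVec, Matrix.mul_one] at h3
      rw [← h3, hsym (M *ᵥ u) u]
    rw [h1, h2]; ring
  have hab : a ≠ 0 ∨ b ≠ 0 := by
    by_contra hcon
    push_neg at hcon
    apply hv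
    funext i
    have h1 := congrFun hcon.1 i
    have h2 := congrFun hcon.2 i
    simp only [haa, hbb, Pi.zero_apply] at h1 h2
    exact Complex.ext h1 h2
  have hPnn : ∀ u : Fin n → ℝ, 0 ≤ u ⬝ᵥ P *ᵥ u := by
    intro u
    rcases eq_or_ne u 0 with h | h
    · simp [h]
    · exact (hpos u h).le
  have hQnp : ∀ u : Fin n → ℝ, u ⬝ᵥ (P * M + Mᵀ * P) *ᵥ u ≤ 0 := by
    intro u
    rcases eq_or_ne u 0 with h | h
    · simp [h]
    · exact (hQ u h).le
  have ha' : a ⬝ᵥ P *ᵥ (M *ᵥ a) = z.re * (a ⬝ᵥ P *ᵥ a) - z.im * (a ⬝ᵥ P *ᵥ b) := by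
    rw [hre, Matrix.mulVec_sub, Matrix.mulVec_smul, Matrix.mulVec_smul,
      dotProduct_sub, dotProduct_smul, dotProduct_smul]
    simp [smul_eq_mul]
  have hb' : b ⬝ᵥ P *ᵥ (M *ᵥ b) = z.im * (b ⬝ᵥ P *ᵥ a) + z.re * (b ⬝ᵥ P *ᵥ b) := by
    rw [him, Matrix.mulVec_add, Matrix.mulVec_smul, Matrix.mulVec_smul,
      dotProduct_add, dotProduct_smul, dotProduct_smul]
    simp [smul_eq_mul]
  have hQab : a ⬝ᵥ ((P * M + Mᵀ * P) *ᵥ a) + b ⬝ᵥ ((P * M + Mᵀ * P) *ᵥ b)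
      = 2 * z.re * (a ⬝ᵥ P *ᵥ a + b ⬝ᵥ P *ᵥ b) := by
    rw [hquad a, hquad b, ha', hb', hsym b a]
    ring
  have hPpos : 0 < a ⬝ᵥ P *ᵥ a + b ⬝ᵥ P *ᵥ b := by
    rcases hab with h | h
    · have := hpos a h; have := hPnn b; linarith
    · have := hpos b h; have := hPnn a; linarith
  have hQneg : a ⬝ᵥ ((P * M + Mᵀ * P) *ᵥ a) + b ⬝ᵥ ((P * M + Mᵀ * P) *ᵥ b) < 0 := by
    rcases hab with h | h
    · have := hQ a h; have := hQnp b; linarith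
    · have := hQ b h; have := hQnp a; linarith
  nlinarith [hQab, hPpos, hQneg]

end Stmt7Aux

theorem stmt_7 (n : ℕ) (A B : Matrix (Fin n) (Fin n) ℝ)
    (hA : IsHurwitz A) (hB : IsHurwitz B)
    (P : Matrix (Fin n) (Fin n) ℝ) (hP : P.IsSymm)
    (hPA : ∀ x : Fin n → ℝ, x ≠ 0 → x ⬝ᵥ (P * A + Aᵀ * P) *ᵥ x < 0)
    (hPB : ∀ x : Fin n → ℝ, x ≠ 0 → x ⬝ᵥ (P * B + Bᵀ * P) *ᵥ x < 0) :
    (∀ x : Fin n → ℝ, x ≠ 0 → x ⬝ᵥ (P * A⁻¹ + (A⁻¹)ᵀ * P) *ᵥ x < 0) ∧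
    ∀ l : ℝ, l ∈ Set.Icc (0 : ℝ) 1 → IsHurwitz (l • A⁻¹ + (1 - l) • B) := by
  have hdetA := Stmt7Aux.hurwitz_isUnit_det A hA
  have part1 := Stmt7Aux.part1_aux A P hdetA hPA
  refine ⟨part1, ?_⟩
  intro l hl
  obtain ⟨hl0, hl1⟩ := hl
  have hpos := Stmt7Aux.lyap_posdef B P hB hPB
  set M : Matrix (Fin n) (Fin n) ℝ := l • A⁻¹ + (1 - l) • B with hM
  apply Stmt7Aux.lyap_hurwitz M P hP hpos
  intro x hx
  have hmat : P * M + Mᵀ * P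
      = l • (P * A⁻¹ + (A⁻¹)ᵀ * P) + (1 - l) • (P * B + Bᵀ * P) := by
    rw [hM]
    simp only [Matrix.transpose_add, Matrix.transpose_smul, Matrix.mul_add, Matrix.add_mul,
      mul_smul_comm, smul_mul_assoc, smul_add]
    abel
  rw [hmat, Matrix.add_mulVec, dotProduct_add, Matrix.smul_mulVec,
    Matrix.smul_mulVec, dotProduct_smul, dotProduct_smul]
  have t1 := part1 x hx
  have t2 := hPB x hx
  simp only [smul_eq_mul]
  rcases eq_or_lt_of_le hl0 with h | h
  · rw [← h]
    simp only [zero_mul, sub_zero, one_mul, zero_add]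
    linarith
  · have hs1 : l * (x ⬝ᵥ (P * A⁻¹ + (A⁻¹)ᵀ * P) *ᵥ x) < 0 := mul_neg_of_pos_of_neg h t1
    have hs2 : (1 - l) * (x ⬝ᵥ (P * B + Bᵀ * P) *ᵥ x) ≤ 0 :=
      mul_nonpos_of_nonneg_of_nonpos (by linarith) t2.le
    linarith
end

section
/- Let F = [[0, 1], [−1, −0.1]] and H = [[0, 0], [1, 0]], α_1 = 0, α_2 = 0.9. Then λ(F + α_1 H) + (1−λ)(F + α_2 H) is Hurwitz stable for all λ ∈ [0,1], but there exists no symmetric matrix P with P(F + α_i H) + (F + α_i H)ᵀP < 0 for both i = 1 and i = 2. -/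
open Matrix Polynomial

lemma aux1 (c : ℝ) (hc : c ≤ -0.1) : IsHurwitz !![0, 1; c, -0.1] := by
  intro z hz
  have hcp : (Matrix.map !![0, 1; c, -0.1] (algebraMap ℝ ℂ)).charpoly
      = X^2 - C (((-0.1 : ℝ) : ℂ)) * X + C ((-c : ℝ) : ℂ) := by
    rw [Matrix.charpoly, Matrix.det_fin_two]
    rw [Matrix.charmatrix_apply_eq, Matrix.charmatrix_apply_eq,
      Matrix.charmatrix_apply_ne _ _ _ (by decide), Matrix.charmatrix_apply_ne _ _ _ (by decide)]
    simp [Matrix.map_apply]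
    ring
  rw [Polynomial.IsRoot, hcp] at hz
  simp only [Polynomial.eval_add, Polynomial.eval_sub, Polynomial.eval_mul,
    Polynomial.eval_pow, Polynomial.eval_C, Polynomial.eval_X] at hz
  have hre := congrArg Complex.re hz
  have him := congrArg Complex.im hz
  simp [pow_two, Complex.mul_re, Complex.mul_im, Complex.ofReal_re, Complex.ofReal_im,
    Complex.add_re, Complex.sub_re, Complex.add_im, Complex.sub_im] at hre him
  rcases eq_or_ne z.im 0 with hy | hy
  · rw [hy] at hre
    nlinarith [hre]
  · have hx : z.re = -0.05 := by
      have h2 : z.im * (z.re + z.re + 0.1) = 0 := by linarith [him]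
      have := (mul_eq_zero.mp h2).resolve_left hy
      linarith
    rw [hx]; norm_num

lemma arith (q r s : ℝ) (hq : 0 < q)
    (hd1 : (s - r)^2 < 2*q*(0.2*r - 2*q))
    (hd2 : (s - 0.1*r)^2 < 0.2*q*(0.2*r - 2*q)) : False := by
  have hr : 0 < r := by nlinarith [sq_nonneg (s - r)]
  nlinarith [sq_nonneg (q - 0.05*r), sq_nonneg ((s - 0.1*r) + (s - r)), mul_pos hr hr,
    sq_nonneg (s - r), sq_nonneg (s - 0.1*r)]

lemma quadform (P : Matrix (Fin 2) (Fin 2) ℝ) (c : ℝ) (x : Fin 2 → ℝ) :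
    x ⬝ᵥ (P * !![0,1;-c,-0.1] + (!![0,1;-c,-0.1])ᵀ * P) *ᵥ x
      = -c*(P 0 1 + P 1 0)*(x 0)^2 + (P 0 0 - 0.1*P 0 1 - c*P 1 1)*(x 0)*(x 1)
        + (P 0 0 - 0.1*P 1 0 - c*P 1 1)*(x 0)*(x 1) + (P 0 1 + P 1 0 - 0.2*P 1 1)*(x 1)^2 := by
  have ht : (!![0,1;-c,-0.1] : Matrix (Fin 2) (Fin 2) ℝ)ᵀ = !![0,-c;1,-0.1] := by
    ext i j; fin_cases i <;> fin_cases j <;> simp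
  rw [ht]
  simp [dotProduct, Matrix.mulVec, Matrix.vecMul, Matrix.mul_apply, Fin.sum_univ_two,
    Matrix.add_apply]
  ring

theorem stmt_12 :
    let F : Matrix (Fin 2) (Fin 2) ℝ := !![0, 1; -1, -0.1]
    let H : Matrix (Fin 2) (Fin 2) ℝ := !![0, 0; 1, 0]
    let α₁ : ℝ := 0
    let α₂ : ℝ := 0.9
    (∀ l : ℝ, l ∈ Set.Icc (0 : ℝ) 1 →
        IsHurwitz (l • (F + α₁ • H) + (1 - l) • (F + α₂ • H))) ∧
    ¬ ∃ P : Matrix (Fin 2) (Fin 2) ℝ, P.IsSymm ∧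
        ∀ α ∈ ({α₁, α₂} : Set ℝ), ∀ x : Fin 2 → ℝ, x ≠ 0 →
          x ⬝ᵥ (P * (F + α • H) + (F + α • H)ᵀ * P) *ᵥ x < 0 := by
  intro F H α₁ α₂
  have hA1 : F + α₁ • H = !![0, 1; -(1:ℝ), -0.1] := by
    ext i j; fin_cases i <;> fin_cases j <;>
      simp [F, H, α₁, Matrix.add_apply, Matrix.smul_apply]
  have hA2 : F + α₂ • H = !![0, 1; -(0.1:ℝ), -0.1] := by
    ext i j; fin_cases i <;> fin_cases j <;>
      simp [F, H, α₂, Matrix.add_apply, Matrix.smul_apply] <;> norm_num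
  constructor
  · intro l hl
    obtain ⟨hl0, hl1⟩ := hl
    have hM : l • (F + α₁ • H) + (1 - l) • (F + α₂ • H)
        = !![0, 1; -0.1 - 0.9*l, -0.1] := by
      rw [hA1, hA2]
      ext i j; fin_cases i <;> fin_cases j <;>
        simp [Matrix.add_apply, Matrix.smul_apply] <;> ring
    rw [hM]
    exact aux1 _ (by norm_num; linarith)
  · rintro ⟨P, hsym, hP⟩
    have hPsym : P 1 0 = P 0 1 := by
      have := congrFun (congrFun hsym 0) 1
      simpa [Matrix.transpose_apply] using this
    set q := P 0 1 with hqdef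
    set r := P 1 1 with hrdef
    set s := P 0 0 - 0.1 * P 0 1 with hsdef
    have mem1 : α₁ ∈ ({α₁, α₂} : Set ℝ) := Set.mem_insert _ _
    have mem2 : α₂ ∈ ({α₁, α₂} : Set ℝ) := Set.mem_insert_of_mem _ rfl
    have key : ∀ (c : ℝ), c = 1 ∨ c = 0.1 → ∀ x : Fin 2 → ℝ, x ≠ 0 →
        -c*(q + q)*(x 0)^2 + (s - c*r)*(x 0)*(x 1)
          + (s - c*r)*(x 0)*(x 1) + (q + q - 0.2*r)*(x 1)^2 < 0 := by
      intro c hc x hx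
      rcases hc with hc | hc
      · have e := hP α₁ mem1 x hx
        rw [hA1] at e
        have : -(1:ℝ) = -(1:ℝ) := rfl
        rw [show (!![0, 1; -(1:ℝ), -0.1]) = !![0,1;-(1:ℝ),-0.1] from rfl] at e
        rw [quadform P 1 x] at e
        rw [hc]
        rw [hPsym] at e
        convert e using 2 <;> ring
      · have e := hP α₂ mem2 x hx
        rw [hA2] at e
        rw [show (!![0, 1; -(0.1:ℝ), -0.1]) = !![0,1;-(0.1:ℝ),-0.1] from rfl] at e
        rw [quadform P 0.1 x] at e
        rw [hc]
        rw [hPsym] at e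
        convert e using 2 <;> ring
    have hq : 0 < q := by
      have := key 1 (Or.inl rfl) ![1, 0] (by
        intro h; have := congrFun h 0; simp at this)
      simp at this
      linarith
    have hrq : q + q - 0.2*r < 0 := by
      have := key 1 (Or.inl rfl) ![0, 1] (by
        intro h; have := congrFun h 1; simp at this)
      simp at this
      linarith
    have hd : ∀ c : ℝ, c = 1 ∨ c = 0.1 → (s - c*r)^2 < 2*c*q*(0.2*r - 2*q) := by
      intro c hc
      have hcpos : 0 < c := by rcases hc with h | h <;> rw [h] <;> norm_num
      have := key c hc ![s - c*r, 2*c*q] (by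
        intro h; have h1 := congrFun h 1; simp at h1
        rcases h1 with h1 | h1
        · exact absurd h1 (ne_of_gt hcpos)
        · exact absurd h1 (ne_of_gt hq))
      simp at this
      nlinarith [this, mul_pos hcpos hq, mul_pos (mul_pos hcpos hcpos) (mul_pos hq hq)]
    have hd1 := hd 1 (Or.inl rfl)
    have hd2 := hd 0.1 (Or.inr rfl)
    norm_num at hd1 hd2
    exact arith q r s hq (by nlinarith [hd1]) (by nlinarith [hd2])
end

section
/- Let F, H be real n×n matrices and α_1, α_2 ∈ ℝ with F + α_1H and F + α_2H Hurwitz stable. Suppose there exist symmetric matrices P_1, P_2 and matrices G, V such that for i = 1, 2 the block matrix [[−G − Gᵀ, P_i − Vᵀ + G(F + α_iH)], [P_i − V + (F + α_iH)ᵀGᵀ, V(F + α_iH) + (F + α_iH)ᵀVᵀ]] is negative definite. Then for every λ ∈ [0,1], (λP_1 + (1−λ)P_2) F_λ + F_λᵀ (λP_1 + (1−λ)P_2) < 0 where F_λ = F + (λα_1 + (1−λ)α_2)H, and hence F_λ is Hurwitz stable. -/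
open Matrix Filter Topology Polynomial


lemma dot_tr {m : ℕ} (A : Matrix (Fin m) (Fin m) ℝ) (v w : Fin m → ℝ) :
    v ⬝ᵥ (Aᵀ *ᵥ w) = w ⬝ᵥ (A *ᵥ v) := by
  rw [mulVec_transpose, dotProduct_comm, ← dotProduct_mulVec]

lemma elim {m : ℕ} (P G V M : Matrix (Fin m) (Fin m) ℝ)
    (h : ∀ y : Fin m ⊕ Fin m → ℝ, y ≠ 0 →
      y ⬝ᵥ (Matrix.fromBlocks (-G - Gᵀ) (P - Vᵀ + G * M)
        (P - V + Mᵀ * Gᵀ) (V * M + Mᵀ * Vᵀ)) *ᵥ y < 0) :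
    ∀ x : Fin m → ℝ, x ≠ 0 → x ⬝ᵥ (P * M + Mᵀ * P) *ᵥ x < 0 := by
  intro x hx
  set u := M *ᵥ x with hu
  have hy : (Sum.elim u x : Fin m ⊕ Fin m → ℝ) ≠ 0 := by
    intro h0
    apply hx
    ext i
    have := congrFun h0 (Sum.inr i)
    simpa using this
  have key := h (Sum.elim u x) hy
  rw [fromBlocks_mulVec] at key
  rw [sumElim_dotProduct_sumElim] at key
  simp only [add_mulVec, sub_mulVec, neg_mulVec, dotProduct_add, dotProduct_sub,
    dotProduct_neg, ← mulVec_mulVec, Sum.elim_comp_inl, Sum.elim_comp_inr] at key ⊢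
  have e1 : u ⬝ᵥ G *ᵥ M *ᵥ x = u ⬝ᵥ G *ᵥ u := by rw [← hu]
  have e2 : x ⬝ᵥ V *ᵥ M *ᵥ x = x ⬝ᵥ V *ᵥ u := by rw [← hu]
  have e3 : x ⬝ᵥ Mᵀ *ᵥ (P *ᵥ x) = u ⬝ᵥ P *ᵥ x := by
    rw [dot_tr M x (P *ᵥ x), dotProduct_comm, ← hu]
  have e4 : x ⬝ᵥ P *ᵥ M *ᵥ x = x ⬝ᵥ P *ᵥ u := by rw [← hu]
  have f1 : u ⬝ᵥ Gᵀ *ᵥ u = u ⬝ᵥ G *ᵥ u := dot_tr G u u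
  have f2 : u ⬝ᵥ Vᵀ *ᵥ x = x ⬝ᵥ V *ᵥ u := dot_tr V u x
  have f3 : x ⬝ᵥ Mᵀ *ᵥ (Gᵀ *ᵥ u) = u ⬝ᵥ G *ᵥ u := by
    rw [dot_tr M x (Gᵀ *ᵥ u), dotProduct_comm, ← hu, f1]
  have f4 : x ⬝ᵥ Mᵀ *ᵥ (Vᵀ *ᵥ x) = x ⬝ᵥ V *ᵥ u := by
    rw [dot_tr M x (Vᵀ *ᵥ x), dotProduct_comm, ← hu, f2]
  rw [f1, f2, f3, f4] at key
  rw [e3, e4]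
  linarith

lemma blocks_convex {m : ℕ} (F H P₁ P₂ G V : Matrix (Fin m) (Fin m) ℝ) (α₁ α₂ l : ℝ) :
    Matrix.fromBlocks (-G - Gᵀ)
      ((l • P₁ + (1 - l) • P₂) - Vᵀ + G * (F + (l * α₁ + (1 - l) * α₂) • H))
      ((l • P₁ + (1 - l) • P₂) - V + (F + (l * α₁ + (1 - l) * α₂) • H)ᵀ * Gᵀ)
      (V * (F + (l * α₁ + (1 - l) * α₂) • H) + (F + (l * α₁ + (1 - l) * α₂) • H)ᵀ * Vᵀ)
    = l • Matrix.fromBlocks (-G - Gᵀ) (P₁ - Vᵀ + G * (F + α₁ • H))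
        (P₁ - V + (F + α₁ • H)ᵀ * Gᵀ) (V * (F + α₁ • H) + (F + α₁ • H)ᵀ * Vᵀ)
      + (1 - l) • Matrix.fromBlocks (-G - Gᵀ) (P₂ - Vᵀ + G * (F + α₂ • H))
        (P₂ - V + (F + α₂ • H)ᵀ * Gᵀ) (V * (F + α₂ • H) + (F + α₂ • H)ᵀ * Vᵀ) := by
  rw [fromBlocks_smul, fromBlocks_smul, fromBlocks_add]
  rw [fromBlocks_inj]
  refine ⟨?_, ?_, ?_, ?_⟩ <;>
  · simp only [Matrix.mul_add, Matrix.add_mul, Matrix.mul_smul, Matrix.smul_mul,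
      transpose_add, transpose_smul, smul_add, smul_sub, smul_smul, add_smul, sub_smul]
    module

lemma charpoly_isRoot_iff {m : ℕ} (A : Matrix (Fin m) (Fin m) ℂ) (z : ℂ) :
    A.charpoly.IsRoot z ↔ ∃ v : Fin m → ℂ, v ≠ 0 ∧ A *ᵥ v = z • v := by
  have heval : A.charpoly.eval z = (z • (1 : Matrix (Fin m) (Fin m) ℂ) - A).det := by
    rw [Matrix.charpoly, _root_.eval_det, matPolyEquiv_charmatrix]
    congr 1
    rw [eval_sub, eval_X, eval_C]
    congr 1
    simp [Matrix.scalar, smul_eq_diagonal_mul]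
  constructor
  · intro h
    have hdet : (z • (1 : Matrix (Fin m) (Fin m) ℂ) - A).det = 0 := by
      rw [← heval]; exact h
    obtain ⟨v, hv, hv0⟩ := (Matrix.exists_mulVec_eq_zero_iff).mpr hdet
    refine ⟨v, hv, ?_⟩
    have := hv0
    rw [sub_mulVec, smul_mulVec, one_mulVec, sub_eq_zero] at this
    exact this.symm
  · rintro ⟨v, hv, hAv⟩
    have hker : (z • (1 : Matrix (Fin m) (Fin m) ℂ) - A) *ᵥ v = 0 := by
      rw [sub_mulVec, smul_mulVec, one_mulVec, hAv, sub_self]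
    have hdet : (z • (1 : Matrix (Fin m) (Fin m) ℂ) - A).det = 0 :=
      (Matrix.exists_mulVec_eq_zero_iff).mp ⟨v, hv, hker⟩
    rwa [Polynomial.IsRoot, heval]

lemma re_form {m : ℕ} (Q : Matrix (Fin m) (Fin m) ℝ) (v : Fin m → ℂ) :
    (star v ⬝ᵥ (Q.map (algebraMap ℝ ℂ)) *ᵥ v).re
      = (fun i => (v i).re) ⬝ᵥ Q *ᵥ (fun i => (v i).re)
        + (fun i => (v i).im) ⬝ᵥ Q *ᵥ (fun i => (v i).im) := by
  simp only [dotProduct, mulVec, Pi.star_apply, map_apply]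
  rw [Complex.re_sum, ← Finset.sum_add_distrib]
  refine Finset.sum_congr rfl fun i _ => ?_
  simp only [Finset.mul_sum, Complex.re_sum, ← Finset.sum_add_distrib]
  refine Finset.sum_congr rfl fun j _ => ?_
  simp only [RCLike.star_def, Complex.coe_algebraMap, Complex.mul_re, Complex.conj_re,
    Complex.conj_im, Complex.ofReal_re, Complex.ofReal_im, Complex.mul_im]
  ring

lemma vec_ne_zero {m : ℕ} {v : Fin m → ℂ} (hv : v ≠ 0) :
    (fun i => (v i).re) ≠ (0 : Fin m → ℝ) ∨ (fun i => (v i).im) ≠ (0 : Fin m → ℝ) := by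
  by_contra h
  push_neg at h
  apply hv
  funext i
  have h1 := congrFun h.1 i
  have h2 := congrFun h.2 i
  simp only [Pi.zero_apply] at h1 h2 ⊢
  exact Complex.ext h1 h2

lemma re_form_neg {m : ℕ} {Q : Matrix (Fin m) (Fin m) ℝ}
    (hQ : ∀ x : Fin m → ℝ, x ≠ 0 → x ⬝ᵥ Q *ᵥ x < 0) :
    ∀ v : Fin m → ℂ, (star v ⬝ᵥ (Q.map (algebraMap ℝ ℂ)) *ᵥ v).re ≤ 0 := by
  intro v
  have hQ' : ∀ x : Fin m → ℝ, x ⬝ᵥ Q *ᵥ x ≤ 0 := by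
    intro x
    by_cases hx : x = 0
    · simp [hx]
    · exact (hQ x hx).le
  rw [re_form]
  have := hQ' fun i => (v i).re
  have := hQ' fun i => (v i).im
  linarith

lemma re_form_neg' {m : ℕ} {Q : Matrix (Fin m) (Fin m) ℝ}
    (hQ : ∀ x : Fin m → ℝ, x ≠ 0 → x ⬝ᵥ Q *ᵥ x < 0) :
    ∀ v : Fin m → ℂ, v ≠ 0 → (star v ⬝ᵥ (Q.map (algebraMap ℝ ℂ)) *ᵥ v).re < 0 := by
  intro v hv
  have hQ' : ∀ x : Fin m → ℝ, x ⬝ᵥ Q *ᵥ x ≤ 0 := by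
    intro x
    by_cases hx : x = 0
    · simp [hx]
    · exact (hQ x hx).le
  rw [re_form]
  rcases vec_ne_zero hv with h | h
  · have := hQ _ h; have := hQ' fun i => (v i).im; linarith
  · have := hQ _ h; have := hQ' fun i => (v i).re; linarith

lemma re_form_pos {m : ℕ} {P : Matrix (Fin m) (Fin m) ℝ}
    (hP : ∀ x : Fin m → ℝ, x ≠ 0 → 0 < x ⬝ᵥ P *ᵥ x) :
    ∀ v : Fin m → ℂ, v ≠ 0 → 0 < (star v ⬝ᵥ (P.map (algebraMap ℝ ℂ)) *ᵥ v).re := by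
  intro v hv
  have hP' : ∀ x : Fin m → ℝ, 0 ≤ x ⬝ᵥ P *ᵥ x := by
    intro x
    by_cases hx : x = 0
    · simp [hx]
    · exact (hP x hx).le
  rw [re_form]
  rcases vec_ne_zero hv with h | h
  · have := hP _ h; have := hP' fun i => (v i).im; linarith
  · have := hP _ h; have := hP' fun i => (v i).re; linarith

lemma map_mul_c {m : ℕ} (X Y : Matrix (Fin m) (Fin m) ℝ) :
    (X * Y).map (algebraMap ℝ ℂ)
      = X.map (algebraMap ℝ ℂ) * Y.map (algebraMap ℝ ℂ) := by
  have := RingHom.map_mul ((algebraMap ℝ ℂ).mapMatrix) X Y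
  simpa [RingHom.mapMatrix_apply] using this

lemma map_add_c {m : ℕ} (X Y : Matrix (Fin m) (Fin m) ℝ) :
    (X + Y).map (algebraMap ℝ ℂ)
      = X.map (algebraMap ℝ ℂ) + Y.map (algebraMap ℝ ℂ) := by
  have := RingHom.map_add ((algebraMap ℝ ℂ).mapMatrix) X Y
  simpa [RingHom.mapMatrix_apply] using this

lemma conjT_c {m : ℕ} (A : Matrix (Fin m) (Fin m) ℝ) :
    (A.map (algebraMap ℝ ℂ))ᴴ = Aᵀ.map (algebraMap ℝ ℂ) := by
  ext i j
  simp [conjTranspose_apply, Matrix.map_apply, Complex.conj_ofReal]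

lemma deriv_form {m : ℕ} (P A : Matrix (Fin m) (Fin m) ℝ) (u : Fin m → ℂ) :
    star ((A.map (algebraMap ℝ ℂ)) *ᵥ u) ⬝ᵥ ((P.map (algebraMap ℝ ℂ)) *ᵥ u)
      + star u ⬝ᵥ ((P.map (algebraMap ℝ ℂ)) *ᵥ ((A.map (algebraMap ℝ ℂ)) *ᵥ u))
    = star u ⬝ᵥ (((P * A + Aᵀ * P).map (algebraMap ℝ ℂ)) *ᵥ u) := by
  rw [map_add_c, map_mul_c, map_mul_c]
  rw [star_mulVec, conjT_c, Matrix.transpose_map]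
  rw [← dotProduct_mulVec, Matrix.add_mulVec, dotProduct_add]
  rw [Matrix.mulVec_mulVec, Matrix.mulVec_mulVec]
  ring

-- coefficient limit
lemma coeff_tendsto (μ : ℂ) (hμ : μ.re < 0) (j : ℕ) :
    Tendsto (fun t : ℝ => Complex.exp ((t:ℂ) * μ) * ((t:ℂ) ^ j / (j.factorial : ℂ)))
      atTop (𝓝 0) := by
  have hreal : Tendsto (fun t : ℝ => t ^ j * Real.exp (t * μ.re) / (j.factorial : ℝ))
      atTop (𝓝 0) := by
    set c : ℝ := -μ.re with hc
    have hc0 : 0 < c := by rw [hc]; linarith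
    have h1 : Tendsto (fun s : ℝ => s ^ j * Real.exp (-s)) atTop (𝓝 0) :=
      Real.tendsto_pow_mul_exp_neg_atTop_nhds_zero j
    have h2 : Tendsto (fun t : ℝ => c * t) atTop atTop :=
      Filter.Tendsto.const_mul_atTop hc0 tendsto_id
    have h3 : Tendsto (fun t : ℝ => (c*t) ^ j * Real.exp (-(c*t))) atTop (𝓝 0) := h1.comp h2
    have h4 := h3.const_mul ((c ^ j) * (j.factorial : ℝ))⁻¹
    rw [mul_zero] at h4
    refine h4.congr fun t => ?_
    have hcj : c ^ j ≠ 0 := pow_ne_zero _ (ne_of_gt hc0)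
    have hfj : (j.factorial : ℝ) ≠ 0 := Nat.cast_ne_zero.mpr j.factorial_ne_zero
    have hexp : Real.exp (-(c*t)) = Real.exp (t * μ.re) := by
      congr 1; rw [hc]; ring
    rw [hexp, mul_pow]
    field_simp
  rw [tendsto_zero_iff_norm_tendsto_zero]
  apply squeeze_zero_norm' ?_ hreal
  filter_upwards [eventually_ge_atTop (0:ℝ)] with t ht
  rw [norm_norm, norm_mul, norm_div, norm_pow]
  rw [Complex.norm_exp]
  have h1 : ((t:ℂ)*μ).re = t * μ.re := by simp
  rw [h1]
  have h2 : ‖(t:ℂ)‖ = t := by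
    rw [Complex.norm_real, Real.norm_eq_abs, abs_of_nonneg ht]
  have h3 : ‖((j.factorial : ℕ) : ℂ)‖ = (j.factorial : ℝ) := by simp
  rw [h2, h3]
  apply le_of_eq
  ring

lemma exists_decaying_solution {m : ℕ} (A : Matrix (Fin m) (Fin m) ℝ) (hA : IsHurwitz A)
    (v : Fin m → ℂ) :
    ∃ x : ℝ → (Fin m → ℂ), x 0 = v ∧
      (∀ t : ℝ, HasDerivAt x ((A.map (algebraMap ℝ ℂ)) *ᵥ x t) t) ∧
      Tendsto x atTop (𝓝 0) := by
  set Ac := A.map (algebraMap ℝ ℂ) with hAc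
  set S : Submodule ℂ (Fin m → ℂ) :=
    { carrier := {v | ∃ x : ℝ → (Fin m → ℂ), x 0 = v ∧
        (∀ t : ℝ, HasDerivAt x (Ac *ᵥ x t) t) ∧ Tendsto x atTop (𝓝 0)}
      add_mem' := by
        rintro a b ⟨xa, ha0, had, hat⟩ ⟨xb, hb0, hbd, hbt⟩
        refine ⟨xa + xb, by simp [ha0, hb0], fun t => ?_, by simpa [Pi.add_def] using hat.add hbt⟩
        have := (had t).add (hbd t)
        simpa [Matrix.mulVec_add] using this
      zero_mem' := by
        refine ⟨fun _ => 0, rfl, fun t => ?_, tendsto_const_nhds⟩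
        simpa using hasDerivAt_const t (0 : Fin m → ℂ)
      smul_mem' := by
        rintro c a ⟨xa, ha0, had, hat⟩
        refine ⟨c • xa, by simp [ha0], fun t => ?_, by simpa [Pi.smul_def] using hat.const_smul c⟩
        have := (had t).const_smul c
        simpa [Matrix.mulVec_smul] using this } with hS
  suffices hv : v ∈ S by exact hv
  set f : Module.End ℂ (Fin m → ℂ) := Matrix.toLinAlgEquiv' Ac with hf
  have htop := Module.End.iSup_maxGenEigenspace_eq_top f
  have hle : ∀ μ : ℂ, f.maxGenEigenspace μ ≤ S := by
    intro μ u hu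
    by_cases hu0 : u = 0
    · rw [hu0]; exact S.zero_mem
    -- μ is an eigenvalue, hence Re μ < 0
    have hev : f.HasEigenvalue μ := by
      have hne : f.maxGenEigenspace μ ≠ ⊥ := by
        intro hbot
        rw [hbot] at hu
        exact hu0 (Submodule.mem_bot ℂ |>.mp hu)
      exact Module.End.HasUnifEigenvalue.lt (by norm_num) hne
    have hμ : μ.re < 0 := by
      obtain ⟨w, hw⟩ := hev.exists_hasEigenvector
      apply hA μ
      rw [charpoly_isRoot_iff]
      refine ⟨w, hw.2, ?_⟩
      have := hw.apply_eq_smul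
      rwa [hf, Matrix.toLinAlgEquiv'_apply] at this
    -- get k with N^(k+1) *ᵥ u = 0
    obtain ⟨k, hk⟩ := (Module.End.mem_maxGenEigenspace f μ u).mp hu
    set N : Matrix (Fin m) (Fin m) ℂ := Ac - μ • 1 with hN
    have hNpow : ∀ j : ℕ, ((f - μ • 1) ^ j) u = (N ^ j) *ᵥ u := by
      intro j
      have : f - μ • 1 = Matrix.toLinAlgEquiv' N := by
        rw [hN, map_sub, _root_.map_smul, _root_.map_one, hf]
      rw [this, ← map_pow, Matrix.toLinAlgEquiv'_apply]
    have hNk : (N ^ (k+1)) *ᵥ u = 0 := by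
      rw [pow_succ', ← Matrix.mulVec_mulVec, ← hNpow, hk, Matrix.mulVec_zero]
    -- the explicit solution
    set w : ℕ → (Fin m → ℂ) := fun j => (N ^ j) *ᵥ u with hw
    have hw0 : w 0 = u := by simp [hw]
    have hwsucc : ∀ j, w (j+1) = N *ᵥ w j := by
      intro j; rw [hw]; simp only
      rw [pow_succ', ← Matrix.mulVec_mulVec]
    have hwK : w (k+1) = 0 := hNk
    set g : ℕ → ℝ → ℂ := fun j t => (t:ℂ) ^ j / (j.factorial : ℂ) with hg
    set y : ℝ → (Fin m → ℂ) := fun t => ∑ j ∈ Finset.range (k+1), g j t • w j with hy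
    have hgd : ∀ (j : ℕ) (t : ℝ), HasDerivAt (fun s => g (j+1) s) (g j t) t := by
      intro j t
      have h1 : HasDerivAt (fun s : ℝ => (s:ℂ)^(j+1)) (((j:ℂ)+1) * (t:ℂ)^j) t := by
        have := (hasDerivAt_pow (j+1) ((t:ℂ))).comp_ofReal
        simpa using this
      have h2 := h1.div_const (((j+1).factorial : ℕ) : ℂ)
      refine h2.congr_deriv ?_
      have hj : ((j.factorial : ℕ) : ℂ) ≠ 0 := Nat.cast_ne_zero.mpr j.factorial_ne_zero
      have hj1 : (((j+1).factorial : ℕ) : ℂ) ≠ 0 := Nat.cast_ne_zero.mpr (j+1).factorial_ne_zero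
      rw [hg]
      simp only
      rw [div_eq_div_iff hj1 hj, Nat.factorial_succ]
      push_cast
      ring
    have hyd : ∀ t, HasDerivAt y (N *ᵥ y t) t := by
      intro t
      have hrepr : ∀ s, y s = (∑ j ∈ Finset.range k, g (j+1) s • w (j+1)) + g 0 s • w 0 := by
        intro s
        rw [hy]
        exact Finset.sum_range_succ' _ k
      have hg0 : ∀ s : ℝ, g 0 s • w 0 = w 0 := by
        intro s; simp [hg]
      have hd : HasDerivAt (fun s => (∑ j ∈ Finset.range k, g (j+1) s • w (j+1)) + w 0)
          (∑ j ∈ Finset.range k, g j t • w (j+1)) t := by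
        have hsum : HasDerivAt (fun s => ∑ j ∈ Finset.range k, g (j+1) s • w (j+1))
            (∑ j ∈ Finset.range k, g j t • w (j+1)) t := by
          apply HasDerivAt.fun_sum
          intro j _
          exact (hgd j t).smul_const (w (j+1))
        simpa using hsum.add_const (w 0)
      have hd' : HasDerivAt y (∑ j ∈ Finset.range k, g j t • w (j+1)) t := by
        refine hd.congr_of_eventuallyEq ?_
        filter_upwards with s
        rw [hrepr s, hg0 s]
      have hNy : N *ᵥ y t = ∑ j ∈ Finset.range k, g j t • w (j+1) := by
        rw [hy]
        simp only
        rw [Finset.sum_range_succ]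
        have : N *ᵥ (∑ j ∈ Finset.range k, g j t • w j + g k t • w k)
            = ∑ j ∈ Finset.range k, g j t • (N *ᵥ w j) + g k t • (N *ᵥ w k) := by
          rw [Matrix.mulVec_add, Matrix.mulVec_smul]
          congr 1
          induction' (Finset.range k) using Finset.induction with a s ha ih
          · simp
          · rw [Finset.sum_insert ha, Finset.sum_insert ha, Matrix.mulVec_add,
              Matrix.mulVec_smul, ih]
        rw [this]
        rw [← hwsucc k, hwK, smul_zero, add_zero]
        exact Finset.sum_congr rfl fun j _ => by rw [hwsucc j]
      rw [hNy]
      exact hd'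
    refine ⟨fun t => Complex.exp ((t:ℂ) * μ) • y t, ?_, ?_, ?_⟩
    · simp only
      have : y 0 = u := by
        rw [hy]
        simp only
        rw [Finset.sum_range_succ' _ k]
        have h1 : ∀ j ∈ Finset.range k, g (j+1) (0:ℝ) • w (j+1) = 0 := by
          intro j _
          simp [hg]
        rw [Finset.sum_congr rfl h1]
        simp [hg, hw0]
      rw [this]
      simp
    · intro t
      have he : HasDerivAt (fun s : ℝ => Complex.exp ((s:ℂ) * μ))
          (Complex.exp ((t:ℂ) * μ) * μ) t := by
        have h1 : HasDerivAt (fun s : ℝ => (s:ℂ) * μ) μ t := by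
          simpa using (Complex.ofRealCLM.hasDerivAt (x := t)).mul_const μ
        simpa using h1.cexp
      have hx := he.smul (hyd t)
      refine hx.congr_deriv ?_
      rw [hAc]
      have hA' : Ac = N + μ • 1 := by rw [hN, sub_add_cancel]
      rw [← hAc, hA', Matrix.add_mulVec, Matrix.mulVec_smul, Matrix.smul_mulVec,
        Matrix.one_mulVec]
      rw [smul_smul, mul_comm (Complex.exp ((t:ℂ) * μ)) μ, ← smul_smul]
    · have hco : ∀ t : ℝ, Complex.exp ((t:ℂ) * μ) • y t
          = ∑ j ∈ Finset.range (k+1), (Complex.exp ((t:ℂ) * μ) * g j t) • w j := by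
        intro t
        rw [hy, Finset.smul_sum]
        exact Finset.sum_congr rfl fun j _ => by rw [smul_smul]
      have : Tendsto (fun t : ℝ => ∑ j ∈ Finset.range (k+1),
          (Complex.exp ((t:ℂ) * μ) * g j t) • w j) atTop (𝓝 0) := by
        have : Tendsto (fun t : ℝ => ∑ j ∈ Finset.range (k+1),
            (Complex.exp ((t:ℂ) * μ) * g j t) • w j) atTop
            (𝓝 (∑ j ∈ Finset.range (k+1), (0:ℂ) • w j)) := by
          apply tendsto_finset_sum
          intro j _
          exact (coeff_tendsto μ hμ j).smul_const (w j)
        simpa using this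
      refine this.congr fun t => (hco t).symm
  have hts : (⊤ : Submodule ℂ (Fin m → ℂ)) ≤ S := by
    rw [← htop]; exact iSup_le hle
  exact hts Submodule.mem_top


lemma re_bilin_repr {m : ℕ} (P : Matrix (Fin m) (Fin m) ℝ) (u w : Fin m → ℂ) :
    (star u ⬝ᵥ (P.map (algebraMap ℝ ℂ)) *ᵥ w).re
      = ∑ i, ∑ j, (star (u i) * ((P.map (algebraMap ℝ ℂ)) i j * w j)).re := by
  simp only [dotProduct, mulVec, Pi.star_apply, Finset.mul_sum, Complex.re_sum]

lemma quad_hasDerivAt {m : ℕ} (P : Matrix (Fin m) (Fin m) ℝ)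
    (x xd : ℝ → (Fin m → ℂ)) (hd : ∀ t, HasDerivAt x (xd t) t) (t : ℝ) :
    HasDerivAt (fun s => (star (x s) ⬝ᵥ (P.map (algebraMap ℝ ℂ)) *ᵥ x s).re)
      ((star (xd t) ⬝ᵥ (P.map (algebraMap ℝ ℂ)) *ᵥ x t).re
        + (star (x t) ⬝ᵥ (P.map (algebraMap ℝ ℂ)) *ᵥ xd t).re) t := by
  set Pc := P.map (algebraMap ℝ ℂ) with hPc
  have hterm : ∀ i j : Fin m, HasDerivAt (fun s => (star (x s i) * (Pc i j * x s j)).re)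
      ((star (xd t i) * (Pc i j * x t j)).re + (star (x t i) * (Pc i j * xd t j)).re) t := by
    intro i j
    have hxi : HasDerivAt (fun s => x s i) (xd t i) t := hasDerivAt_pi.mp (hd t) i
    have hxj : HasDerivAt (fun s => x s j) (xd t j) t := hasDerivAt_pi.mp (hd t) j
    have hs : HasDerivAt (fun s => star (x s i)) (star (xd t i)) t := hxi.star
    have hc : HasDerivAt (fun s => Pc i j * x s j) (Pc i j * xd t j) t := hxj.const_mul (Pc i j)
    have hmul := hs.mul hc
    have h2 : HasDerivAt (fun s => (star (x s i) * (Pc i j * x s j)).re)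
        ((star (xd t i) * (Pc i j * x t j) + star (x t i) * (Pc i j * xd t j)).re) t :=
      Complex.reCLM.hasFDerivAt.comp_hasDerivAt t hmul
    exact h2.congr_deriv (by rw [Complex.add_re])
  have hsum : HasDerivAt (fun s => ∑ i, ∑ j, (star (x s i) * (Pc i j * x s j)).re)
      (∑ i, ∑ j, ((star (xd t i) * (Pc i j * x t j)).re
        + (star (x t i) * (Pc i j * xd t j)).re)) t := by
    apply HasDerivAt.fun_sum
    intro i _
    apply HasDerivAt.fun_sum
    intro j _
    exact hterm i j
  have heq : (fun s => (star (x s) ⬝ᵥ Pc *ᵥ x s).re)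
      = fun s => ∑ i, ∑ j, (star (x s i) * (Pc i j * x s j)).re := by
    funext s
    exact re_bilin_repr P (x s) (x s)
  rw [heq]
  have hval : (∑ i, ∑ j, ((star (xd t i) * (Pc i j * x t j)).re
        + (star (x t i) * (Pc i j * xd t j)).re))
      = (star (xd t) ⬝ᵥ Pc *ᵥ x t).re + (star (x t) ⬝ᵥ Pc *ᵥ xd t).re := by
    rw [re_bilin_repr P (xd t) (x t), re_bilin_repr P (x t) (xd t)]
    rw [← Finset.sum_add_distrib]
    refine Finset.sum_congr rfl fun i _ => ?_
    rw [← Finset.sum_add_distrib]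
  rw [← hval]
  exact hsum

lemma quad_continuous {m : ℕ} (P : Matrix (Fin m) (Fin m) ℝ) :
    Continuous (fun v : Fin m → ℂ => (star v ⬝ᵥ (P.map (algebraMap ℝ ℂ)) *ᵥ v).re) := by
  apply Complex.continuous_re.comp
  simp only [dotProduct, mulVec, Pi.star_apply]
  apply continuous_finset_sum
  intro i _
  apply Continuous.mul
  · exact continuous_star.comp (continuous_apply i)
  · apply continuous_finset_sum
    intro j _
    exact continuous_const.mul (continuous_apply j)

lemma lyap_pos {m : ℕ} (A P : Matrix (Fin m) (Fin m) ℝ) (hA : IsHurwitz A)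
    (hQ : ∀ x : Fin m → ℝ, x ≠ 0 → x ⬝ᵥ (P * A + Aᵀ * P) *ᵥ x < 0) :
    ∀ x : Fin m → ℝ, x ≠ 0 → 0 < x ⬝ᵥ P *ᵥ x := by
  by_contra hcon
  push_neg at hcon
  obtain ⟨x₀, hx₀, hle⟩ := hcon
  set v : Fin m → ℂ := fun i => ((x₀ i : ℝ) : ℂ) with hv
  have hvne : v ≠ 0 := by
    intro h
    apply hx₀
    funext i
    have := congrFun h i
    simpa [hv, Complex.ofReal_eq_zero] using this
  obtain ⟨x, hx0, hxd, hxt⟩ := exists_decaying_solution A hA v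
  set Pc := P.map (algebraMap ℝ ℂ) with hPc
  set g : ℝ → ℝ := fun s => (star (x s) ⬝ᵥ Pc *ᵥ x s).re with hg
  have hgd : ∀ t, HasDerivAt g
      ((star (x t) ⬝ᵥ ((P * A + Aᵀ * P).map (algebraMap ℝ ℂ)) *ᵥ x t).re) t := by
    intro t
    have := quad_hasDerivAt P x (fun t => (A.map (algebraMap ℝ ℂ)) *ᵥ x t) hxd t
    have hform := deriv_form P A (x t)
    have : HasDerivAt g ((star ((A.map (algebraMap ℝ ℂ)) *ᵥ x t) ⬝ᵥ Pc *ᵥ x t).re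
        + (star (x t) ⬝ᵥ Pc *ᵥ ((A.map (algebraMap ℝ ℂ)) *ᵥ x t)).re) t := this
    refine this.congr_deriv ?_
    rw [← Complex.add_re, hform]
  -- derivative nonpositive
  have hgd' : ∀ t, deriv g t ≤ 0 := by
    intro t
    rw [(hgd t).deriv]
    exact re_form_neg hQ (x t)
  have hdiff : Differentiable ℝ g := fun t => (hgd t).differentiableAt
  have hanti : Antitone g := antitone_of_deriv_nonpos hdiff hgd'
  -- g 0 ≤ 0
  have hg0 : g 0 ≤ 0 := by
    rw [hg]
    simp only [hx0]
    rw [hPc, re_form]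
    have hre : (fun i => (v i).re) = x₀ := by funext i; simp [hv]
    have him : (fun i => (v i).im) = (0 : Fin m → ℝ) := by funext i; simp [hv]
    rw [hre, him]
    simpa using hle
  -- strict decrease at 0
  have hd0 : (star v ⬝ᵥ ((P * A + Aᵀ * P).map (algebraMap ℝ ℂ)) *ᵥ v).re < 0 :=
    re_form_neg' hQ v hvne
  have hslope : Tendsto (slope g 0) (𝓝[≠] (0:ℝ))
      (𝓝 ((star v ⬝ᵥ ((P * A + Aᵀ * P).map (algebraMap ℝ ℂ)) *ᵥ v).re)) := by
    have := hgd 0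
    rw [hasDerivAt_iff_tendsto_slope] at this
    rw [hx0] at this
    exact this
  have hev : ∀ᶠ s in 𝓝[>] (0:ℝ), slope g 0 s < 0 := by
    have h1 : ∀ᶠ s in 𝓝[≠] (0:ℝ), slope g 0 s < 0 :=
      hslope.eventually_lt_const hd0
    exact h1.filter_mono (nhdsWithin_mono 0 (fun s hs => ne_of_gt hs))
  obtain ⟨t₁, ht₁pos, ht₁⟩ : ∃ t₁ : ℝ, 0 < t₁ ∧ slope g 0 t₁ < 0 := by
    have h2 : ∀ᶠ s in 𝓝[>] (0:ℝ), 0 < s ∧ slope g 0 s < 0 := by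
      filter_upwards [hev, self_mem_nhdsWithin] with s h1 h2
      exact ⟨h2, h1⟩
    obtain ⟨s, hs⟩ := h2.exists
    exact ⟨s, hs.1, hs.2⟩
  have hgt₁ : g t₁ < 0 := by
    have : slope g 0 t₁ = (g t₁ - g 0) / t₁ := by
      rw [slope_def_field]; ring_nf
    rw [this] at ht₁
    have := (div_neg_iff.mp ht₁)
    rcases this with ⟨h1, h2⟩ | ⟨h1, h2⟩
    · linarith
    · linarith
  -- g tends to 0 at infinity
  have hgtend : Tendsto g atTop (𝓝 0) := by
    have hc := quad_continuous P
    have : Tendsto (fun s => (star (x s) ⬝ᵥ Pc *ᵥ x s).re) atTop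
        (𝓝 ((star (0 : Fin m → ℂ) ⬝ᵥ Pc *ᵥ (0 : Fin m → ℂ)).re)) :=
      (hc.tendsto 0).comp hxt
    simpa using this
  have hfin : ∀ᶠ s in atTop, g t₁ < g s := by
    apply hgtend.eventually_const_lt hgt₁
  obtain ⟨s, hs1, hs2⟩ : ∃ s, t₁ ≤ s ∧ g t₁ < g s := by
    have := hfin.and (eventually_ge_atTop t₁)
    obtain ⟨s, h1, h2⟩ := this.exists
    exact ⟨s, h2, h1⟩
  have := hanti hs1
  linarith


lemma pd_hurwitz {m : ℕ} (M P : Matrix (Fin m) (Fin m) ℝ)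
    (hP : ∀ x : Fin m → ℝ, x ≠ 0 → 0 < x ⬝ᵥ P *ᵥ x)
    (hQ : ∀ x : Fin m → ℝ, x ≠ 0 → x ⬝ᵥ (P * M + Mᵀ * P) *ᵥ x < 0) :
    IsHurwitz M := by
  intro z hz
  obtain ⟨v, hv, hMv⟩ := (charpoly_isRoot_iff _ z).mp hz
  have hp : 0 < (star v ⬝ᵥ (P.map (algebraMap ℝ ℂ)) *ᵥ v).re := re_form_pos hP v hv
  have hq : (star v ⬝ᵥ ((P * M + Mᵀ * P).map (algebraMap ℝ ℂ)) *ᵥ v).re < 0 :=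
    re_form_neg' hQ v hv
  have hform := deriv_form P M v
  rw [hMv] at hform
  rw [star_smul, smul_dotProduct, Matrix.mulVec_smul, dotProduct_smul] at hform
  set p := star v ⬝ᵥ (P.map (algebraMap ℝ ℂ)) *ᵥ v with hpdef
  have hsum : star z • p + z • p
      = (((2 * z.re : ℝ) : ℂ)) * p := by
    rw [smul_eq_mul, smul_eq_mul, ← add_mul]
    congr 1
    rw [add_comm]
    exact_mod_cast Complex.add_conj z
  rw [hsum] at hform
  rw [← hform] at hq
  have : (((2 * z.re : ℝ) : ℂ) * p).re = 2 * z.re * p.re := by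
    rw [Complex.mul_re]
    simp
  rw [this] at hq
  nlinarith



theorem stmt_17 (n : ℕ) (F H : Matrix (Fin n) (Fin n) ℝ) (α₁ α₂ : ℝ)
    (h1 : IsHurwitz (F + α₁ • H)) (h2 : IsHurwitz (F + α₂ • H))
    (P₁ P₂ G V : Matrix (Fin n) (Fin n) ℝ) (hP₁ : P₁.IsSymm) (hP₂ : P₂.IsSymm)
    (hLMI : ∀ i : Fin 2,
      let α := if i = 0 then α₁ else α₂
      let P := if i = 0 then P₁ else P₂
      ∀ x : Fin n ⊕ Fin n → ℝ, x ≠ 0 →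
        x ⬝ᵥ (Matrix.fromBlocks (-G - Gᵀ) (P - Vᵀ + G * (F + α • H))
          (P - V + (F + α • H)ᵀ * Gᵀ) (V * (F + α • H) + (F + α • H)ᵀ * Vᵀ)) *ᵥ x < 0) :
    ∀ l : ℝ, l ∈ Set.Icc (0 : ℝ) 1 →
      (∀ x : Fin n → ℝ, x ≠ 0 →
        x ⬝ᵥ ((l • P₁ + (1 - l) • P₂) * (F + (l * α₁ + (1 - l) * α₂) • H) +
          (F + (l * α₁ + (1 - l) * α₂) • H)ᵀ * (l • P₁ + (1 - l) • P₂)) *ᵥ x < 0) ∧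
      IsHurwitz (F + (l * α₁ + (1 - l) * α₂) • H) := by
  intro l hl
  obtain ⟨hl0, hl1⟩ := hl
  have hL1 : ∀ x : Fin n ⊕ Fin n → ℝ, x ≠ 0 →
      x ⬝ᵥ (Matrix.fromBlocks (-G - Gᵀ) (P₁ - Vᵀ + G * (F + α₁ • H))
        (P₁ - V + (F + α₁ • H)ᵀ * Gᵀ) (V * (F + α₁ • H) + (F + α₁ • H)ᵀ * Vᵀ)) *ᵥ x < 0 := by
    have := hLMI 0
    simpa using this
  have hL2 : ∀ x : Fin n ⊕ Fin n → ℝ, x ≠ 0 →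
      x ⬝ᵥ (Matrix.fromBlocks (-G - Gᵀ) (P₂ - Vᵀ + G * (F + α₂ • H))
        (P₂ - V + (F + α₂ • H)ᵀ * Gᵀ) (V * (F + α₂ • H) + (F + α₂ • H)ᵀ * Vᵀ)) *ᵥ x < 0 := by
    have := hLMI 1
    simpa using this
  -- convex combination of scalars
  have hconv : ∀ q1 q2 : ℝ, q1 < 0 → q2 < 0 → l * q1 + (1 - l) * q2 < 0 := by
    intro q1 q2 hq1 hq2
    rcases eq_or_lt_of_le hl0 with h | h
    · rw [← h]; simpa using hq2
    · have h1 : l * q1 < 0 := mul_neg_of_pos_of_neg h hq1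
      have h2 : (1 - l) * q2 ≤ 0 := mul_nonpos_of_nonneg_of_nonpos (by linarith) hq2.le
      linarith
  have hconvp : ∀ q1 q2 : ℝ, 0 < q1 → 0 < q2 → 0 < l * q1 + (1 - l) * q2 := by
    intro q1 q2 hq1 hq2
    rcases eq_or_lt_of_le hl0 with h | h
    · rw [← h]; simpa using hq2
    · have h1 : 0 < l * q1 := mul_pos h hq1
      have h2 : 0 ≤ (1 - l) * q2 := mul_nonneg (by linarith) hq2.le
      linarith
  -- the convex-combination LMI
  have hLl : ∀ y : Fin n ⊕ Fin n → ℝ, y ≠ 0 →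
      y ⬝ᵥ (Matrix.fromBlocks (-G - Gᵀ)
        ((l • P₁ + (1 - l) • P₂) - Vᵀ + G * (F + (l * α₁ + (1 - l) * α₂) • H))
        ((l • P₁ + (1 - l) • P₂) - V + (F + (l * α₁ + (1 - l) * α₂) • H)ᵀ * Gᵀ)
        (V * (F + (l * α₁ + (1 - l) * α₂) • H)
          + (F + (l * α₁ + (1 - l) * α₂) • H)ᵀ * Vᵀ)) *ᵥ y < 0 := by
    intro y hy
    rw [blocks_convex F H P₁ P₂ G V α₁ α₂ l]
    rw [Matrix.add_mulVec, Matrix.smul_mulVec, Matrix.smul_mulVec,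
      dotProduct_add, dotProduct_smul, dotProduct_smul, smul_eq_mul, smul_eq_mul]
    exact hconv _ _ (hL1 y hy) (hL2 y hy)
  -- eliminate to the Lyapunov inequalities
  have hQ1 := elim P₁ G V (F + α₁ • H) hL1
  have hQ2 := elim P₂ G V (F + α₂ • H) hL2
  have hQl := elim (l • P₁ + (1 - l) • P₂) G V (F + (l * α₁ + (1 - l) * α₂) • H) hLl
  -- positive definiteness
  have hP1pos := lyap_pos (F + α₁ • H) P₁ h1 hQ1
  have hP2pos := lyap_pos (F + α₂ • H) P₂ h2 hQ2
  have hPlpos : ∀ x : Fin n → ℝ, x ≠ 0 → 0 < x ⬝ᵥ (l • P₁ + (1 - l) • P₂) *ᵥ x := by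
    intro x hx
    rw [Matrix.add_mulVec, Matrix.smul_mulVec, Matrix.smul_mulVec,
      dotProduct_add, dotProduct_smul, dotProduct_smul, smul_eq_mul, smul_eq_mul]
    exact hconvp _ _ (hP1pos x hx) (hP2pos x hx)
  exact ⟨hQl, pd_hurwitz _ _ hPlpos hQl⟩
end
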